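/- arXiv:1803.05682 — 7 statements merged into one kernel-verified Lean document; each statement's English description precedes it below -/
import Mathlib

section
/- Let P be a substochastic kernel on a countable set E contained in a group (𝓔, ⋆), and let u ∈ E satisfy E ⋆ u ⊆ E and p(x ⋆ u, y ⋆ u) ≥ p(x, y) for all x, y ∈ E. Define T_u f (x) = f(x ⋆ u) and A_u f (x) = Σ_y a_u(x,y) f(y), where a_u(x,y) = p(x⋆u, y) − p(x, y⋆u⁻¹) if y ∈ E⋆u and a_u(x,y) = p(x⋆u, y) otherwise. Then all coefficients a_u(x,y) are nonnegative, and for every nonnegative function φ : E → ℝ₊ one has T_u(Pφ) = P(T_u φ) + A_u φ pointwise on E. -/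
open scoped ENNReal Classical BigOperators
open Filter

noncomputable section

namespace RW

variable {G : Type*}

/-- One-step transition operator `Pφ(x) = Σ_y p(x,y) φ(y)`. -/
def kapp (p : G → G → ℝ≥0∞) (φ : G → ℝ≥0∞) (x : G) : ℝ≥0∞ := ∑' y, p x y * φ y

/-- n-step transition kernel. -/
def kiter (p : G → G → ℝ≥0∞) : ℕ → G → G → ℝ≥0∞
  | 0 => fun x y => if x = y then 1 else 0
  | n + 1 => fun x y => ∑' z, p x z * kiter p n z y

/-- Green function `G(x,y) = Σ_t ℙ_x(X(t)=y)`. -/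
def green (p : G → G → ℝ≥0∞) (x y : G) : ℝ≥0∞ := ∑' n, kiter p n x y

/-- Green operator `Gφ(x) = Σ_y G(x,y) φ(y)`. -/
def greenApp (p : G → G → ℝ≥0∞) (φ : G → ℝ≥0∞) (x : G) : ℝ≥0∞ := ∑' y, green p x y * φ y

/-- Probability of first hitting `y` at time `n ≥ 1`. -/
def fhit (p : G → G → ℝ≥0∞) : ℕ → G → G → ℝ≥0∞
  | 0 => fun _ _ => 0
  | 1 => p
  | n + 2 => fun x y => ∑' z, if z = y then 0 else p x z * fhit p (n + 1) z y

/-- Hitting probability `Q(x,y) = ℙ_x(∃ t ≥ 1, X(t) = y)`. -/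
def hitProb (p : G → G → ℝ≥0∞) (x y : G) : ℝ≥0∞ := ∑' n, fhit p n x y

/-- Survival probability `ℙ_x(τ_ϑ > n)`. -/
def surv (p : G → G → ℝ≥0∞) (n : ℕ) (x : G) : ℝ≥0∞ := ∑' y, kiter p n x y

/-- Expected lifetime `𝔼_x(τ_ϑ) = Σ_n ℙ_x(τ_ϑ > n)`. -/
def gexp (p : G → G → ℝ≥0∞) (x : G) : ℝ≥0∞ := ∑' n, surv p n x

variable [Group G]

/-- Matrix coefficients `a_u(x,y)` of the operator `A_u = T_u P - P T_u`. -/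
def acoef (p : G → G → ℝ≥0∞) (E : Set G) (u x y : G) : ℝ≥0∞ :=
  if y * u⁻¹ ∈ E then p (x * u) y - p x (y * u⁻¹) else p (x * u) y

/-- The operator `A_u φ(x) = Σ_y a_u(x,y) φ(y)`. -/
def Aop (p : G → G → ℝ≥0∞) (E : Set G) (u : G) (φ : G → ℝ≥0∞) (x : G) : ℝ≥0∞ :=
  ∑' y, acoef p E u x y * φ y

/-- Ladder height transition kernel `p_H(x,y) = G A_x 𝟙_{y}(e)`. -/
def ladder (p : G → G → ℝ≥0∞) (E : Set G) (x y : G) : ℝ≥0∞ :=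
  ∑' z, green p 1 z * acoef p E x z y

/-- The renewal function `V(x) = 𝔼_x(𝒯_ϑ)` of the ladder height process. -/
def V (p : G → G → ℝ≥0∞) (E : Set G) (x : G) : ℝ≥0∞ :=
  ∑' n, surv (ladder p E) n x

end RW

end

namespace RW

variable {G : Type*} [Group G]

theorem kapp_comp_mul_right (p : G → G → ℝ≥0∞) (φ : G → ℝ≥0∞) (u x : G) :
    kapp p (fun z => φ (z * u)) x = ∑' y, p x (y * u⁻¹) * φ y := by
  rw [kapp, ← (Equiv.mulRight u).tsum_eq (fun y => p x (y * u⁻¹) * φ y)]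
  simp only [Equiv.coe_mulRight, mul_inv_cancel_right]

/-- The truncated subtraction in `acoef` loses nothing: on `E * u` it is exact by
monotonicity, and off `E * u` the subtracted term vanishes since `p x` is supported in `E`. -/
theorem add_acoef_eq {p : G → G → ℝ≥0∞} {E : Set G} {u x : G}
    (hsupp : ∀ z ∉ E, p x z = 0) (hmono : ∀ y ∈ E, p x y ≤ p (x * u) (y * u)) (y : G) :
    p x (y * u⁻¹) + acoef p E u x y = p (x * u) y := by
  unfold acoef
  split_ifs with hy
  · exact add_tsub_cancel_of_le (by simpa using hmono _ hy)
  · rw [hsupp _ hy, zero_add]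

end RW

open RW

theorem statement0_general {G : Type*} [Group G]
    (p : G → G → ℝ≥0∞) (E : Set G)
    (hsupp : ∀ x y, p x y ≠ 0 → x ∈ E ∧ y ∈ E)
    (u : G)
    (hmono : ∀ x ∈ E, ∀ y ∈ E, p x y ≤ p (x * u) (y * u)) :
    (∀ x y, 0 ≤ acoef p E u x y) ∧
    ∀ (φ : G → ℝ≥0∞), ∀ x ∈ E,
      kapp p φ (x * u) = kapp p (fun z => φ (z * u)) x + Aop p E u φ x := by
  refine ⟨fun _ _ => zero_le, fun φ x hx => ?_⟩
  have hdecomp : ∀ y, p x (y * u⁻¹) + acoef p E u x y = p (x * u) y :=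
    add_acoef_eq (fun z hz => by_contra fun h => hz (hsupp x z h).2) (hmono x hx)
  rw [kapp_comp_mul_right, Aop, ← ENNReal.tsum_add]
  simp only [← add_mul, hdecomp, kapp]

theorem statement0 {G : Type*} [Group G] [Countable G]
    (p : G → G → ℝ≥0∞) (E : Set G)
    (hsupp : ∀ x y, p x y ≠ 0 → x ∈ E ∧ y ∈ E)
    (hsub : ∀ x, (∑' y, p x y) ≤ 1)
    (u : G) (hu : u ∈ E)
    (hEu : ∀ x ∈ E, x * u ∈ E)
    (hmono : ∀ x ∈ E, ∀ y ∈ E, p x y ≤ p (x * u) (y * u)) :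
    (∀ x y, 0 ≤ acoef p E u x y) ∧
    ∀ (φ : G → ℝ≥0∞), ∀ x ∈ E,
      kapp p φ (x * u) = kapp p (fun z => φ (z * u)) x + Aop p E u φ x :=
  statement0_general p E hsupp u hmono
end

section
/- Under the same hypotheses (irreducible transient substochastic chain on E, E⋆u ⊆ E, p(x⋆u,y⋆u) ≥ p(x,y), and Q(x, x⋆u) ≥ δ > 0 for all x), if g : E → ℝ₊ is a potential function (i.e. g = Gφ for some nonnegative φ, equivalently g is superharmonic with lim_n Pⁿg = 0 pointwise), then T_u g is also a potential function, namely T_u g = Gψ with ψ = (I − P) T_u g. -/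
open scoped ENNReal Classical BigOperators
open Filter

open RW

/-! Write `h = T_u g`. Since `p` only grows under right translation by `u`, `Pⁿh ≤ T_u(Pⁿg)`
on `E`. For `n = 1` this makes `h` superharmonic, and since `Pⁿg = Pⁿ(Gφ)` is the tail
`Σ_{m ≥ n} Pᵐφ` of the finite series `Gφ`, also `Pⁿh → 0`. Telescoping
`h = Σ_{n<N} Pⁿ(h - Ph) + Pᴺh` then gives `h = G(h - Ph)`. -/

open Topology

namespace RW

section Kernel

variable {G : Type*} (p : G → G → ℝ≥0∞)

noncomputable def iterApp (n : ℕ) (φ : G → ℝ≥0∞) (x : G) : ℝ≥0∞ :=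
  ∑' y, kiter p n x y * φ y

lemma iterApp_zero (φ : G → ℝ≥0∞) (x : G) : iterApp p 0 φ x = φ x := by
  rw [iterApp, tsum_eq_single x fun y hy => by simp [kiter, Ne.symm hy]]
  simp [kiter]

lemma iterApp_succ (n : ℕ) (φ : G → ℝ≥0∞) (x : G) :
    iterApp p (n + 1) φ x = kapp p (iterApp p n φ) x := by
  simp only [iterApp, kapp, kiter]
  calc ∑' y, (∑' z, p x z * kiter p n z y) * φ y
      = ∑' z, ∑' y, p x z * kiter p n z y * φ y := by
        simp only [← ENNReal.tsum_mul_right]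
        exact ENNReal.tsum_comm
    _ = ∑' z, p x z * ∑' y, kiter p n z y * φ y := by
        simp only [mul_assoc, ENNReal.tsum_mul_left]

lemma iterApp_one (φ : G → ℝ≥0∞) (x : G) : iterApp p 1 φ x = kapp p φ x := by
  rw [iterApp_succ]
  exact tsum_congr fun y => by rw [iterApp_zero]

lemma iterApp_kapp (n : ℕ) (φ : G → ℝ≥0∞) (x : G) :
    iterApp p n (kapp p φ) x = iterApp p (n + 1) φ x := by
  induction n generalizing x with
  | zero => rw [iterApp_zero, iterApp_one]
  | succ n ih =>
    rw [iterApp_succ, iterApp_succ p (n + 1)]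
    exact tsum_congr fun y => by rw [ih]

lemma iterApp_iterApp (n m : ℕ) (φ : G → ℝ≥0∞) (x : G) :
    iterApp p n (iterApp p m φ) x = iterApp p (n + m) φ x := by
  induction n generalizing x with
  | zero => rw [iterApp_zero, zero_add]
  | succ n ih =>
    rw [iterApp_succ, Nat.add_right_comm, iterApp_succ]
    exact tsum_congr fun y => by rw [ih]

lemma greenApp_eq_tsum_iterApp (φ : G → ℝ≥0∞) (x : G) :
    greenApp p φ x = ∑' n, iterApp p n φ x := by
  simp only [greenApp, green, iterApp, ← ENNReal.tsum_mul_right]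
  exact ENNReal.tsum_comm

lemma iterApp_greenApp (n : ℕ) (φ : G → ℝ≥0∞) (x : G) :
    iterApp p n (greenApp p φ) x = ∑' m, iterApp p (m + n) φ x := by
  calc iterApp p n (greenApp p φ) x
      = ∑' m, iterApp p n (iterApp p m φ) x := by
        simp only [iterApp, greenApp_eq_tsum_iterApp, ← ENNReal.tsum_mul_left]
        exact ENNReal.tsum_comm
    _ = ∑' m, iterApp p (m + n) φ x := by simp only [iterApp_iterApp, add_comm]

lemma iterApp_greenApp_le (n : ℕ) (φ : G → ℝ≥0∞) (x : G) :
    iterApp p n (greenApp p φ) x ≤ greenApp p φ x := by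
  rw [iterApp_greenApp, greenApp_eq_tsum_iterApp]
  exact ENNReal.summable.tsum_le_tsum_of_inj (· + n) (add_left_injective n)
    (fun _ _ => zero_le) (fun _ => le_rfl) ENNReal.summable

lemma tendsto_iterApp_greenApp {φ : G → ℝ≥0∞} {x : G} (hfin : greenApp p φ x ≠ ⊤) :
    Tendsto (fun n => iterApp p n (greenApp p φ) x) atTop (𝓝 0) := by
  rw [greenApp_eq_tsum_iterApp] at hfin
  simpa only [iterApp_greenApp] using ENNReal.tendsto_sum_nat_add (iterApp p · φ x) hfin

section Riesz

variable {h : G → ℝ≥0∞} (hsuper : ∀ z, kapp p h z ≤ h z)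
include hsuper

lemma iterApp_sub_kapp_add_iterApp_succ (n : ℕ) (x : G) :
    iterApp p n (fun z => h z - kapp p h z) x + iterApp p (n + 1) h x = iterApp p n h x := by
  rw [← iterApp_kapp, iterApp, iterApp, iterApp, ← ENNReal.tsum_add]
  exact tsum_congr fun y => by rw [← mul_add, tsub_add_cancel_of_le (hsuper y)]

lemma sum_iterApp_sub_kapp_add_iterApp (N : ℕ) (x : G) :
    ∑ n ∈ Finset.range N, iterApp p n (fun z => h z - kapp p h z) x + iterApp p N h x = h x := by
  induction N with
  | zero => simp [iterApp_zero]
  | succ N ih =>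
    rw [Finset.sum_range_succ, add_assoc, iterApp_sub_kapp_add_iterApp_succ p hsuper, ih]

lemma eq_greenApp_sub_kapp {x : G} (hlim : Tendsto (fun n => iterApp p n h x) atTop (𝓝 0)) :
    h x = greenApp p (fun z => h z - kapp p h z) x := by
  have hpartial := (ENNReal.tendsto_nat_tsum
    fun n => iterApp p n (fun z => h z - kapp p h z) x).add hlim
  rw [add_zero, ← greenApp_eq_tsum_iterApp] at hpartial
  refine tendsto_nhds_unique ?_ hpartial
  simp only [sum_iterApp_sub_kapp_add_iterApp p hsuper]
  exact tendsto_const_nhds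

end Riesz

variable {E : Set G} (hsupp : ∀ x y, p x y ≠ 0 → x ∈ E ∧ y ∈ E)
include hsupp

lemma mem_of_kiter_ne_zero {n : ℕ} {x y : G} (hx : x ∈ E) (hne : kiter p n x y ≠ 0) : y ∈ E := by
  induction n generalizing x with
  | zero =>
    obtain rfl : x = y := by simpa [kiter] using hne
    exact hx
  | succ n ih =>
    obtain ⟨z, hz⟩ : ∃ z, p x z * kiter p n z y ≠ 0 := by
      simpa [kiter, ENNReal.tsum_eq_zero] using hne
    rw [mul_ne_zero_iff] at hz
    exact ih (hsupp x z hz.1).2 hz.2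

lemma iterApp_congr_of_eqOn {f f' : G → ℝ≥0∞} (hff' : Set.EqOn f f' E) (n : ℕ) {x : G}
    (hx : x ∈ E) : iterApp p n f x = iterApp p n f' x := by
  refine tsum_congr fun y => ?_
  by_cases hy : kiter p n x y = 0
  · simp [hy]
  · rw [hff' (mem_of_kiter_ne_zero p hsupp hx hy)]

lemma kapp_eq_zero_of_notMem (f : G → ℝ≥0∞) {x : G} (hx : x ∉ E) : kapp p f x = 0 :=
  ENNReal.tsum_eq_zero.mpr fun y => by
    rw [of_not_not (mt (fun h => (hsupp x y h).1) hx), zero_mul]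

end Kernel

section Translation

variable {G : Type*} [Group G] (p : G → G → ℝ≥0∞) {E : Set G} {u : G}
  (hsupp : ∀ x y, p x y ≠ 0 → x ∈ E ∧ y ∈ E)
  (hmono : ∀ x ∈ E, ∀ y ∈ E, p x y ≤ p (x * u) (y * u))
include hsupp hmono

lemma kiter_le_kiter_mul_right (n : ℕ) (x y : G) :
    kiter p n x y ≤ kiter p n (x * u) (y * u) := by
  induction n generalizing x with
  | zero => simp [kiter]
  | succ n ih =>
    refine ENNReal.summable.tsum_le_tsum_of_inj (· * u) (mul_left_injective u)
      (fun _ _ => zero_le) (fun z => mul_le_mul' ?_ (ih z)) ENNReal.summable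
    by_cases hz : p x z = 0
    · simp [hz]
    · exact hmono x (hsupp x z hz).1 z (hsupp x z hz).2

lemma iterApp_comp_mul_right_le (f : G → ℝ≥0∞) (n : ℕ) (x : G) :
    iterApp p n (fun w => f (w * u)) x ≤ iterApp p n f (x * u) :=
  ENNReal.summable.tsum_le_tsum_of_inj (· * u) (mul_left_injective u) (fun _ _ => zero_le)
    (fun y => mul_le_mul' (kiter_le_kiter_mul_right p hsupp hmono n x y) le_rfl)
    ENNReal.summable

lemma iterApp_comp_mul_right_le_greenApp (hEu : ∀ x ∈ E, x * u ∈ E) {g φ : G → ℝ≥0∞}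
    (hpot : ∀ x ∈ E, g x = greenApp p φ x) (n : ℕ) {x : G} (hx : x ∈ E) :
    iterApp p n (fun w => g (w * u)) x ≤ iterApp p n (greenApp p φ) (x * u) :=
  (iterApp_comp_mul_right_le p hsupp hmono g n x).trans_eq
    (iterApp_congr_of_eqOn p hsupp hpot n (hEu x hx))

end Translation

end RW

theorem statement2_general {G : Type*} [Group G]
    (p : G → G → ℝ≥0∞) (E : Set G)
    (hsupp : ∀ x y, p x y ≠ 0 → x ∈ E ∧ y ∈ E)
    (u : G)
    (hEu : ∀ x ∈ E, x * u ∈ E)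
    (hmono : ∀ x ∈ E, ∀ y ∈ E, p x y ≤ p (x * u) (y * u))
    (g φ : G → ℝ≥0∞) (hgfin : ∀ x ∈ E, g x ≠ ⊤)
    (hpot : ∀ x ∈ E, g x = greenApp p φ x) :
    ∀ x ∈ E,
      g (x * u) =
        greenApp p (fun z => g (z * u) - kapp p (fun w => g (w * u)) z) x := by
  have hdom := iterApp_comp_mul_right_le_greenApp p hsupp hmono hEu hpot
  have hsuper : ∀ z, kapp p (fun w => g (w * u)) z ≤ g (z * u) := by
    intro z
    by_cases hz : z ∈ E
    · rw [← iterApp_one, hpot _ (hEu z hz)]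
      exact (hdom 1 hz).trans (iterApp_greenApp_le p 1 φ _)
    · rw [kapp_eq_zero_of_notMem p hsupp _ hz]
      exact zero_le
  intro x hx
  have hfin : greenApp p φ (x * u) ≠ ⊤ := hpot _ (hEu x hx) ▸ hgfin _ (hEu x hx)
  exact eq_greenApp_sub_kapp p hsuper <| tendsto_of_tendsto_of_tendsto_of_le_of_le
    tendsto_const_nhds (tendsto_iterApp_greenApp p hfin) (fun _ => zero_le) (hdom · hx)

theorem statement2 {G : Type*} [Group G] [Countable G]
    (p : G → G → ℝ≥0∞) (E : Set G)
    (hsupp : ∀ x y, p x y ≠ 0 → x ∈ E ∧ y ∈ E)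
    (hsub : ∀ x, (∑' y, p x y) ≤ 1)
    (hirr : ∀ x ∈ E, ∀ y ∈ E, 0 < hitProb p x y)
    (htrans : ∀ x ∈ E, green p x x < ⊤)
    (u : G) (hu : u ∈ E)
    (hEu : ∀ x ∈ E, x * u ∈ E)
    (hmono : ∀ x ∈ E, ∀ y ∈ E, p x y ≤ p (x * u) (y * u))
    (δ : ℝ≥0∞) (hδ : 0 < δ)
    (hQ : ∀ x ∈ E, δ ≤ hitProb p x (x * u))
    (g φ : G → ℝ≥0∞) (hgfin : ∀ x ∈ E, g x ≠ ⊤)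
    (hpot : ∀ x ∈ E, g x = greenApp p φ x) :
    ∀ x ∈ E,
      g (x * u) =
        greenApp p (fun z => g (z * u) - kapp p (fun w => g (w * u)) z) x :=
  statement2_general p E hsupp u hEu hmono g φ hgfin hpot
end

section
/- Under hypotheses (A0)–(A2) and Q(x, x⋆u) ≥ δ > 0 for all x ∈ E: for every minimal harmonic function h of the chain there exists γ ≥ 0 such that for every n ≥ 1, T_uⁿ h − γⁿ h is a potential function and T_uⁿ h − γⁿ h = G A_{u^{⋆n}} h = Σ_{k=1}^{n} γ^{k-1} T_u^{n-k} G A_u h. -/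
open scoped ENNReal Classical BigOperators
open Filter

open RW

/-!
Monotonicity of `p` under right translation makes `T_v h` superharmonic for `v = uⁿ`, with
`T_v h = P T_v h + A_v h`, so Riesz decomposition gives `T_v h = g_v + G A_v h` where
`g_v = lim_k P^k T_v h` is harmonic. The bound `Q(x, xu) h(xu) ≤ h(x)` gives `δ g_u ≤ h`, and
minimality turns this into `g_u = γ h`. Iterating `T_u h = γ h + G A_u h` writes `T_uⁿ h` as
`γⁿ h` plus translates of the potential `G A_u h`; these are annihilated by `P^k` as `k → ∞`
(translation commutes with `P` up to an inequality), so `g_{uⁿ} = γⁿ h`, and both identities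
follow by comparing the two expressions for `T_uⁿ h`.
-/

open scoped Topology
open Finset

namespace RW

section Kernel

variable {G : Type*}

theorem kapp_add (q : G → G → ℝ≥0∞) (f g : G → ℝ≥0∞) (x : G) :
    kapp q (fun y => f y + g y) x = kapp q f x + kapp q g x := by
  simp only [kapp, mul_add, ENNReal.tsum_add]

theorem kapp_const_mul (q : G → G → ℝ≥0∞) (c : ℝ≥0∞) (f : G → ℝ≥0∞) (x : G) :
    kapp q (fun y => c * f y) x = c * kapp q f x := by
  simp only [kapp, ← ENNReal.tsum_mul_left, mul_left_comm]

theorem kapp_finsetSum {ι : Type*} (q : G → G → ℝ≥0∞) (s : Finset ι) (F : ι → G → ℝ≥0∞)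
    (x : G) : kapp q (fun y => ∑ j ∈ s, F j y) x = ∑ j ∈ s, kapp q (F j) x := by
  simp only [kapp, mul_sum]
  exact Summable.tsum_finsetSum fun _ _ => ENNReal.summable

theorem kapp_tsum (q : G → G → ℝ≥0∞) (F : ℕ → G → ℝ≥0∞) (x : G) :
    kapp q (fun y => ∑' i, F i y) x = ∑' i, kapp q (F i) x := by
  simp only [kapp, ← ENNReal.tsum_mul_left]
  exact ENNReal.tsum_comm

theorem kapp_mono_of_support {q : G → G → ℝ≥0∞} {f g : G → ℝ≥0∞} {x : G}
    (h : ∀ y, q x y ≠ 0 → f y ≤ g y) : kapp q f x ≤ kapp q g x := by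
  refine ENNReal.tsum_le_tsum fun y => ?_
  by_cases hy : q x y = 0
  · simp [hy]
  · exact mul_le_mul_right (h y hy) _

theorem kapp_congr_of_support {q : G → G → ℝ≥0∞} {f g : G → ℝ≥0∞} {x : G}
    (h : ∀ y, q x y ≠ 0 → f y = g y) : kapp q f x = kapp q g x :=
  le_antisymm (kapp_mono_of_support fun y hy => (h y hy).le)
    (kapp_mono_of_support fun y hy => (h y hy).ge)

theorem kapp_sub_le (q : G → G → ℝ≥0∞) (f g : G → ℝ≥0∞) (x : G) :
    kapp q f x - kapp q g x ≤ kapp q (fun y => f y - g y) x := by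
  rw [tsub_le_iff_right, ← kapp_add]
  exact kapp_mono_of_support fun y _ => le_tsub_add

theorem kapp_kapp (q r : G → G → ℝ≥0∞) (φ : G → ℝ≥0∞) (x : G) :
    kapp q (kapp r φ) x = kapp (fun x y => ∑' z, q x z * r z y) φ x := by
  simp only [kapp, ← ENNReal.tsum_mul_left, ← ENNReal.tsum_mul_right, mul_assoc]
  exact ENNReal.tsum_comm

variable {p : G → G → ℝ≥0∞}

@[simp]
theorem kapp_kiter_zero (φ : G → ℝ≥0∞) (x : G) : kapp (kiter p 0) φ x = φ x := by
  simp [kapp, kiter]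

theorem kapp_kiter_succ (k : ℕ) (φ : G → ℝ≥0∞) (x : G) :
    kapp (kiter p (k + 1)) φ x = kapp p (kapp (kiter p k) φ) x :=
  (kapp_kapp p (kiter p k) φ x).symm

theorem kapp_kiter_congr {E : Set G} (hE : ∀ x ∈ E, ∀ y, p x y ≠ 0 → y ∈ E)
    {f g : G → ℝ≥0∞} (hfg : ∀ y ∈ E, f y = g y) (k : ℕ) {x : G} (hx : x ∈ E) :
    kapp (kiter p k) f x = kapp (kiter p k) g x := by
  induction k generalizing x with
  | zero => simpa using hfg x hx
  | succ k ih =>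
    simp only [kapp_kiter_succ]
    exact kapp_congr_of_support fun y hy => ih (hE x hx y hy)

theorem greenApp_eq_tsum (φ : G → ℝ≥0∞) (x : G) :
    greenApp p φ x = ∑' k, kapp (kiter p k) φ x := by
  simp only [greenApp, green, kapp, ← ENNReal.tsum_mul_right]
  exact ENNReal.tsum_comm

theorem greenApp_eq_kapp_add (φ : G → ℝ≥0∞) (x : G) :
    greenApp p φ x = kapp p (greenApp p φ) x + φ x := by
  have hG : greenApp p φ = fun y => ∑' k, kapp (kiter p k) φ y := funext (greenApp_eq_tsum φ)
  rw [greenApp_eq_tsum φ x, tsum_eq_zero_add' ENNReal.summable, kapp_kiter_zero, add_comm, hG,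
    kapp_tsum]
  simp only [kapp_kiter_succ]

end Kernel

section Riesz

variable {G : Type*} {p : G → G → ℝ≥0∞} {E : Set G}

noncomputable def harmonicPart (p : G → G → ℝ≥0∞) (s : G → ℝ≥0∞) (x : G) : ℝ≥0∞ :=
  ⨅ k, kapp (kiter p k) s x

theorem eq_kapp_kiter_add_sum (hE : ∀ x ∈ E, ∀ y, p x y ≠ 0 → y ∈ E) {s a : G → ℝ≥0∞}
    (hs : ∀ x ∈ E, s x = kapp p s x + a x) (k : ℕ) {x : G} (hx : x ∈ E) :
    s x = kapp (kiter p k) s x + ∑ i ∈ range k, kapp (kiter p i) a x := by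
  induction k generalizing x with
  | zero => simp
  | succ k ih =>
    calc s x = kapp p s x + a x := hs x hx
      _ = kapp p (fun y => kapp (kiter p k) s y + ∑ i ∈ range k, kapp (kiter p i) a y) x
          + a x := by rw [kapp_congr_of_support fun y hy => ih (hE x hx y hy)]
      _ = kapp (kiter p (k + 1)) s x + ∑ i ∈ range (k + 1), kapp (kiter p i) a x := by
          rw [kapp_add, kapp_finsetSum, sum_range_succ', kapp_kiter_zero, add_assoc]
          simp only [kapp_kiter_succ]

theorem kapp_kiter_eq_sub (hE : ∀ x ∈ E, ∀ y, p x y ≠ 0 → y ∈ E) {s a : G → ℝ≥0∞}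
    (hs : ∀ x ∈ E, s x = kapp p s x + a x) (k : ℕ) {x : G} (hx : x ∈ E) (hfin : s x ≠ ⊤) :
    kapp (kiter p k) s x = s x - ∑ i ∈ range k, kapp (kiter p i) a x := by
  have h := eq_kapp_kiter_add_sum hE hs k hx
  refine ENNReal.eq_sub_of_add_eq (ne_top_of_le_ne_top hfin ?_) h.symm
  exact h ▸ le_add_self

theorem antitone_kapp_kiter (hE : ∀ x ∈ E, ∀ y, p x y ≠ 0 → y ∈ E) {s a : G → ℝ≥0∞}
    (hs : ∀ x ∈ E, s x = kapp p s x + a x) {x : G} (hx : x ∈ E) (hfin : s x ≠ ⊤) :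
    Antitone fun k => kapp (kiter p k) s x := by
  intro k l hkl
  simp only [kapp_kiter_eq_sub hE hs _ hx hfin]
  exact tsub_le_tsub_left (sum_le_sum_of_subset (range_subset_range.2 hkl)) _

theorem tendsto_kapp_kiter_harmonicPart (hE : ∀ x ∈ E, ∀ y, p x y ≠ 0 → y ∈ E)
    {s a : G → ℝ≥0∞} (hs : ∀ x ∈ E, s x = kapp p s x + a x) {x : G} (hx : x ∈ E)
    (hfin : s x ≠ ⊤) :
    Tendsto (fun k => kapp (kiter p k) s x) atTop (𝓝 (harmonicPart p s x)) :=
  tendsto_atTop_iInf (antitone_kapp_kiter hE hs hx hfin)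

theorem greenApp_le (hE : ∀ x ∈ E, ∀ y, p x y ≠ 0 → y ∈ E) {s a : G → ℝ≥0∞}
    (hs : ∀ x ∈ E, s x = kapp p s x + a x) {x : G} (hx : x ∈ E) : greenApp p a x ≤ s x := by
  rw [greenApp_eq_tsum, ENNReal.tsum_eq_iSup_nat]
  exact iSup_le fun k => eq_kapp_kiter_add_sum hE hs k hx ▸ le_add_self

theorem harmonicPart_eq_sub (hE : ∀ x ∈ E, ∀ y, p x y ≠ 0 → y ∈ E) {s a : G → ℝ≥0∞}
    (hs : ∀ x ∈ E, s x = kapp p s x + a x) {x : G} (hx : x ∈ E) (hfin : s x ≠ ⊤) :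
    harmonicPart p s x = s x - greenApp p a x := by
  rw [greenApp_eq_tsum, ENNReal.tsum_eq_iSup_nat, ENNReal.sub_iSup hfin]
  exact iInf_congr fun k => kapp_kiter_eq_sub hE hs k hx hfin

theorem harmonicPart_add_greenApp (hE : ∀ x ∈ E, ∀ y, p x y ≠ 0 → y ∈ E) {s a : G → ℝ≥0∞}
    (hs : ∀ x ∈ E, s x = kapp p s x + a x) {x : G} (hx : x ∈ E) (hfin : s x ≠ ⊤) :
    harmonicPart p s x + greenApp p a x = s x := by
  rw [harmonicPart_eq_sub hE hs hx hfin]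
  exact tsub_add_cancel_of_le (greenApp_le hE hs hx)

theorem kapp_harmonicPart (hE : ∀ x ∈ E, ∀ y, p x y ≠ 0 → y ∈ E) {s a : G → ℝ≥0∞}
    (hs : ∀ x ∈ E, s x = kapp p s x + a x) (hfin : ∀ x ∈ E, s x ≠ ⊤) {x : G} (hx : x ∈ E) :
    kapp p (harmonicPart p s) x = harmonicPart p s x := by
  refine le_antisymm (le_iInf fun k => ?_) ?_
  · calc kapp p (harmonicPart p s) x ≤ kapp p (kapp (kiter p k) s) x :=
          kapp_mono_of_support fun y _ => iInf_le _ k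
      _ = kapp (kiter p (k + 1)) s x := (kapp_kiter_succ k s x).symm
      _ ≤ kapp (kiter p k) s x := antitone_kapp_kiter hE hs hx (hfin x hx) k.le_succ
  · have ha : a x ≠ ⊤ :=
      ne_top_of_le_ne_top (hfin x hx) ((hs x hx).symm ▸ le_add_self)
    have hGa : a x ≤ greenApp p a x := by
      rw [greenApp_eq_tsum]
      simpa using ENNReal.le_tsum (f := fun k => kapp (kiter p k) a x) 0
    calc harmonicPart p s x = s x - greenApp p a x := harmonicPart_eq_sub hE hs hx (hfin x hx)
      _ = (s x - a x) - (greenApp p a x - a x) := by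
          rw [tsub_tsub, add_tsub_cancel_of_le hGa]
      _ = kapp p s x - kapp p (greenApp p a) x := by
          rw [ENNReal.eq_sub_of_add_eq ha (hs x hx).symm,
            ENNReal.eq_sub_of_add_eq ha (greenApp_eq_kapp_add a x).symm]
      _ ≤ kapp p (fun y => s y - greenApp p a y) x := kapp_sub_le p _ _ x
      _ = kapp p (harmonicPart p s) x := kapp_congr_of_support fun y hy =>
          (harmonicPart_eq_sub hE hs (hE x hx y hy) (hfin y (hE x hx y hy))).symm

theorem kapp_kiter_of_harmonic (hE : ∀ x ∈ E, ∀ y, p x y ≠ 0 → y ∈ E) {h : G → ℝ≥0∞}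
    (hharm : ∀ x ∈ E, kapp p h x = h x) (k : ℕ) {x : G} (hx : x ∈ E) :
    kapp (kiter p k) h x = h x := by
  have hs : ∀ x ∈ E, h x = kapp p h x + (fun _ => 0) x := fun x hx => by simp [hharm x hx]
  simpa [kapp] using (eq_kapp_kiter_add_sum hE hs k hx).symm

theorem tendsto_kapp_kiter_greenApp (φ : G → ℝ≥0∞) {x : G} (hfin : greenApp p φ x ≠ ⊤) :
    Tendsto (fun k => kapp (kiter p k) (greenApp p φ) x) atTop (𝓝 0) := by
  have hE : ∀ x ∈ (Set.univ : Set G), ∀ y, p x y ≠ 0 → y ∈ Set.univ := fun _ _ _ _ => trivial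
  have hs : ∀ x ∈ (Set.univ : Set G), greenApp p φ x = kapp p (greenApp p φ) x + φ x :=
    fun x _ => greenApp_eq_kapp_add φ x
  simpa [harmonicPart_eq_sub hE hs (Set.mem_univ x) hfin] using
    tendsto_kapp_kiter_harmonicPart hE hs (Set.mem_univ x) hfin

end Riesz

section Hitting

variable {G : Type*} {p : G → G → ℝ≥0∞} {E : Set G}

theorem sum_range_fhit_succ (x y : G) (N : ℕ) :
    ∑ n ∈ range (N + 1), fhit p (n + 1) x y
      = p x y + ∑' z, if z = y then 0 else p x z * ∑ n ∈ range N, fhit p (n + 1) z y := by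
  have hz : ∀ z, (if z = y then 0 else p x z * ∑ n ∈ range N, fhit p (n + 1) z y)
      = ∑ n ∈ range N, if z = y then 0 else p x z * fhit p (n + 1) z y := fun z => by
    split_ifs <;> simp [mul_sum]
  rw [sum_range_succ', tsum_congr hz, Summable.tsum_finsetSum fun _ _ => ENNReal.summable,
    add_comm]
  rfl

theorem sum_range_fhit_mul_le (hE : ∀ x ∈ E, ∀ y, p x y ≠ 0 → y ∈ E) {h : G → ℝ≥0∞}
    (hsup : ∀ x ∈ E, kapp p h x ≤ h x) (y : G) (N : ℕ) {x : G} (hx : x ∈ E) :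
    (∑ n ∈ range N, fhit p (n + 1) x y) * h y ≤ h x := by
  induction N generalizing x with
  | zero => simp
  | succ N ih =>
    rw [sum_range_fhit_succ, add_mul, ← ENNReal.tsum_mul_right]
    calc _ ≤ p x y * h y + ∑' z, if z = y then 0 else p x z * h z := by
          refine add_le_add_right (ENNReal.tsum_le_tsum fun z => ?_) _
          split_ifs
          · simp
          · rw [mul_assoc]
            by_cases hp : p x z = 0
            · simp [hp]
            · exact mul_le_mul_right (ih (hE x hx z hp)) _
      _ = kapp p h x := (ENNReal.tsum_eq_add_tsum_ite (f := fun z => p x z * h z) y).symm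
      _ ≤ h x := hsup x hx

theorem hitProb_mul_le (hE : ∀ x ∈ E, ∀ y, p x y ≠ 0 → y ∈ E) {h : G → ℝ≥0∞}
    (hsup : ∀ x ∈ E, kapp p h x ≤ h x) {x : G} (hx : x ∈ E) (y : G) :
    hitProb p x y * h y ≤ h x := by
  rw [hitProb, tsum_eq_zero_add' ENNReal.summable, show fhit p 0 x y = 0 from rfl, zero_add,
    ENNReal.tsum_eq_iSup_nat, ENNReal.iSup_mul]
  exact iSup_le fun N => sum_range_fhit_mul_le hE hsup y N hx

end Hitting

section Translation

variable {G : Type*} [Group G] {p : G → G → ℝ≥0∞} {E : Set G} {v : G}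

theorem kapp_comp_mul_right_le (hE : ∀ x ∈ E, ∀ y, p x y ≠ 0 → y ∈ E)
    (hmv : ∀ x ∈ E, ∀ y ∈ E, p x y ≤ p (x * v) (y * v)) (φ : G → ℝ≥0∞) {x : G} (hx : x ∈ E) :
    kapp p (fun y => φ (y * v)) x ≤ kapp p φ (x * v) :=
  calc kapp p (fun y => φ (y * v)) x ≤ ∑' y, p (x * v) (y * v) * φ (y * v) := by
        refine ENNReal.tsum_le_tsum fun y => ?_
        by_cases hy : p x y = 0
        · simp [hy]
        · exact mul_le_mul_left (hmv x hx y (hE x hx y hy)) _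
    _ ≤ kapp p φ (x * v) := ENNReal.tsum_comp_le_tsum_of_injective (mul_left_injective v) _

theorem kapp_kiter_comp_mul_right_le (hE : ∀ x ∈ E, ∀ y, p x y ≠ 0 → y ∈ E)
    (hmv : ∀ x ∈ E, ∀ y ∈ E, p x y ≤ p (x * v) (y * v)) (φ : G → ℝ≥0∞) (k : ℕ) {x : G}
    (hx : x ∈ E) : kapp (kiter p k) (fun y => φ (y * v)) x ≤ kapp (kiter p k) φ (x * v) := by
  induction k generalizing x with
  | zero => simp
  | succ k ih =>
    simp only [kapp_kiter_succ]
    exact (kapp_mono_of_support fun y hy => ih (hE x hx y hy)).trans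
      (kapp_comp_mul_right_le hE hmv _ hx)

theorem tendsto_kapp_kiter_greenApp_comp_mul_right (hE : ∀ x ∈ E, ∀ y, p x y ≠ 0 → y ∈ E)
    (hmv : ∀ x ∈ E, ∀ y ∈ E, p x y ≤ p (x * v) (y * v)) (φ : G → ℝ≥0∞) {x : G} (hx : x ∈ E)
    (hfin : greenApp p φ (x * v) ≠ ⊤) :
    Tendsto (fun k => kapp (kiter p k) (fun y => greenApp p φ (y * v)) x) atTop (𝓝 0) :=
  tendsto_of_tendsto_of_tendsto_of_le_of_le tendsto_const_nhds
    (tendsto_kapp_kiter_greenApp φ hfin) (fun _ => zero_le)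
    fun k => kapp_kiter_comp_mul_right_le hE hmv _ k hx

theorem apply_mul_right_eq_kapp_add_Aop (hE : ∀ x ∈ E, ∀ y, p x y ≠ 0 → y ∈ E)
    (hEv : ∀ x ∈ E, x * v ∈ E) (hmv : ∀ x ∈ E, ∀ y ∈ E, p x y ≤ p (x * v) (y * v))
    {h : G → ℝ≥0∞} (hharm : ∀ x ∈ E, kapp p h x = h x) {x : G} (hx : x ∈ E) :
    h (x * v) = kapp p (fun y => h (y * v)) x + Aop p E v h x := by
  have hshift : kapp p (fun y => h (y * v)) x = ∑' y, p x (y * v⁻¹) * h y := by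
    rw [← (Equiv.mulRight v).tsum_eq]
    simp [kapp]
  have hcoef : ∀ y, p x (y * v⁻¹) * h y + acoef p E v x y * h y = p (x * v) y * h y := by
    intro y
    by_cases hp : p x (y * v⁻¹) = 0
    · simp [acoef, hp]
    · have hy : y * v⁻¹ ∈ E := hE x hx _ hp
      have hle : p x (y * v⁻¹) ≤ p (x * v) y := by
        simpa using hmv x hx _ hy
      rw [acoef, if_pos hy, ← add_mul, add_tsub_cancel_of_le hle]
  rw [hshift, Aop, ← ENNReal.tsum_add, tsum_congr hcoef]
  exact (hharm _ (hEv x hx)).symm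

end Translation

section Powers

variable {M : Type*} [Monoid M] {E : Set M} {u : M}

theorem mul_pow_mem (hEu : ∀ x ∈ E, x * u ∈ E) (n : ℕ) : ∀ x ∈ E, x * u ^ n ∈ E := by
  induction n with
  | zero => simp
  | succ n ih => exact fun x hx => by simpa [pow_succ, mul_assoc] using hEu _ (ih x hx)

theorem apply_le_apply_mul_pow {p : M → M → ℝ≥0∞} (hEu : ∀ x ∈ E, x * u ∈ E)
    (hmu : ∀ x ∈ E, ∀ y ∈ E, p x y ≤ p (x * u) (y * u)) (n : ℕ) :
    ∀ x ∈ E, ∀ y ∈ E, p x y ≤ p (x * u ^ n) (y * u ^ n) := by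
  induction n with
  | zero => simp
  | succ n ih =>
    intro x hx y hy
    simpa [pow_succ, mul_assoc] using
      (ih x hx y hy).trans (hmu _ (mul_pow_mem hEu n x hx) _ (mul_pow_mem hEu n y hy))

theorem apply_mul_pow_eq {R : Type*} [CommSemiring R] (hEu : ∀ x ∈ E, x * u ∈ E)
    {f g : M → R} {γ : R} (hf : ∀ x ∈ E, f (x * u) = γ * f x + g x) (n : ℕ) {x : M}
    (hx : x ∈ E) :
    f (x * u ^ n) = γ ^ n * f x + ∑ j ∈ range n, γ ^ j * g (x * u ^ (n - 1 - j)) := by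
  induction n with
  | zero => simp
  | succ n ih =>
    have hshift : ∑ j ∈ range (n + 1), γ ^ j * g (x * u ^ (n + 1 - 1 - j))
        = γ * ∑ j ∈ range n, γ ^ j * g (x * u ^ (n - 1 - j)) + g (x * u ^ n) := by
      rw [sum_range_succ', mul_sum]
      refine congrArg₂ (· + ·) (sum_congr rfl fun j _ => ?_) (by simp)
      rw [show n + 1 - 1 - (j + 1) = n - 1 - j by omega, pow_succ]
      ring
    rw [pow_succ, ← mul_assoc, hf _ (mul_pow_mem hEu n x hx), ih, hshift]
    ring

end Powers

section MinimalHarmonic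

variable {G : Type*} [Group G] {p : G → G → ℝ≥0∞} {E : Set G} {u : G} {h : G → ℝ≥0∞}

theorem harmonicPart_add_greenApp_Aop (hE : ∀ x ∈ E, ∀ y, p x y ≠ 0 → y ∈ E)
    (hEu : ∀ x ∈ E, x * u ∈ E) (hmu : ∀ x ∈ E, ∀ y ∈ E, p x y ≤ p (x * u) (y * u))
    (hfin : ∀ x ∈ E, h x ≠ ⊤) (hharm : ∀ x ∈ E, kapp p h x = h x) {x : G} (hx : x ∈ E) :
    harmonicPart p (fun y => h (y * u)) x + greenApp p (Aop p E u h) x = h (x * u) :=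
  harmonicPart_add_greenApp hE (fun _ hy => apply_mul_right_eq_kapp_add_Aop hE hEu hmu hharm hy)
    hx (hfin _ (hEu x hx))

theorem exists_harmonicPart_eq_mul (hE : ∀ x ∈ E, ∀ y, p x y ≠ 0 → y ∈ E)
    (hEu : ∀ x ∈ E, x * u ∈ E) (hmu : ∀ x ∈ E, ∀ y ∈ E, p x y ≤ p (x * u) (y * u))
    {δ : ℝ≥0∞} (hδ : 0 < δ) (hQ : ∀ x ∈ E, δ ≤ hitProb p x (x * u))
    (hfin : ∀ x ∈ E, h x ≠ ⊤) (hne : ∃ x ∈ E, h x ≠ 0) (hharm : ∀ x ∈ E, kapp p h x = h x)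
    (hmin : ∀ h' : G → ℝ≥0∞, (∀ x ∈ E, kapp p h' x = h' x) →
      (∀ x ∈ E, h' x ≤ h x) → ∃ c : ℝ≥0∞, ∀ x ∈ E, h' x = c * h x) :
    ∃ γ, γ ≠ ⊤ ∧ ∀ x ∈ E, harmonicPart p (fun y => h (y * u)) x = γ * h x := by
  set g := harmonicPart p fun y => h (y * u)
  -- `δ` may be `⊤`; its truncation is a finite positive constant with the same property
  set ε := min δ 1
  have hε : ε ≠ 0 := (lt_min hδ one_pos).ne'
  have hε' : ε ≠ ⊤ := ne_top_of_le_ne_top ENNReal.one_ne_top (min_le_right _ _)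
  have hle : ∀ x ∈ E, ε * g x ≤ h x := fun x hx =>
    calc ε * g x ≤ hitProb p x (x * u) * h (x * u) :=
          mul_le_mul' ((min_le_left _ _).trans (hQ x hx)) ((iInf_le _ 0).trans_eq (by simp))
      _ ≤ h x := hitProb_mul_le hE (fun x hx => (hharm x hx).le) hx _
  have hgharm : ∀ x ∈ E, kapp p (fun y => ε * g y) x = ε * g x := fun x hx => by
    rw [kapp_const_mul, kapp_harmonicPart hE
      (fun _ hy => apply_mul_right_eq_kapp_add_Aop hE hEu hmu hharm hy)
      (fun y hy => hfin _ (hEu y hy)) hx]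
  obtain ⟨c, hc⟩ := hmin _ hgharm hle
  obtain ⟨x₀, hx₀, hhx₀⟩ := hne
  have hc' : c ≠ ⊤ := by
    rintro rfl
    have := hc x₀ hx₀ ▸ hle x₀ hx₀
    rw [ENNReal.top_mul hhx₀, top_le_iff] at this
    exact hfin x₀ hx₀ this
  refine ⟨ε⁻¹ * c, ENNReal.mul_ne_top (ENNReal.inv_ne_top.2 hε) hc', fun x hx => ?_⟩
  rw [mul_assoc, ← hc x hx, ← mul_assoc, ENNReal.inv_mul_cancel hε hε', one_mul]

theorem harmonicPart_comp_mul_pow_eq (hE : ∀ x ∈ E, ∀ y, p x y ≠ 0 → y ∈ E)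
    (hEu : ∀ x ∈ E, x * u ∈ E) (hmu : ∀ x ∈ E, ∀ y ∈ E, p x y ≤ p (x * u) (y * u))
    (hfin : ∀ x ∈ E, h x ≠ ⊤) (hharm : ∀ x ∈ E, kapp p h x = h x) {γ : ℝ≥0∞} (hγ : γ ≠ ⊤)
    (hstep : ∀ x ∈ E, h (x * u) = γ * h x + greenApp p (Aop p E u h) x) (n : ℕ) {x : G}
    (hx : x ∈ E) : harmonicPart p (fun y => h (y * u ^ n)) x = γ ^ n * h x := by
  set f := greenApp p (Aop p E u h)
  have hffin : ∀ y ∈ E, f y ≠ ⊤ := fun y hy => ne_top_of_le_ne_top (hfin _ (hEu y hy))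
    (greenApp_le hE (fun _ hz => apply_mul_right_eq_kapp_add_Aop hE hEu hmu hharm hz) hy)
  have hPk : ∀ k, kapp (kiter p k) (fun y => h (y * u ^ n)) x
      = γ ^ n * h x
        + ∑ j ∈ range n, γ ^ j * kapp (kiter p k) (fun y => f (y * u ^ (n - 1 - j))) x := by
    intro k
    rw [kapp_kiter_congr hE (fun y hy => apply_mul_pow_eq hEu hstep n hy) k hx, kapp_add,
      kapp_const_mul, kapp_kiter_of_harmonic hE hharm k hx, kapp_finsetSum]
    simp only [kapp_const_mul]
  have hlim : Tendsto (fun k => kapp (kiter p k) (fun y => h (y * u ^ n)) x) atTop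
      (𝓝 (γ ^ n * h x)) := by
    simp only [hPk]
    simpa using tendsto_const_nhds.add (tendsto_finsetSum _ fun j _ =>
      ENNReal.Tendsto.const_mul (tendsto_kapp_kiter_greenApp_comp_mul_right hE
        (apply_le_apply_mul_pow hEu hmu _) _ hx (hffin _ (mul_pow_mem hEu _ x hx)))
        (Or.inr (ENNReal.pow_ne_top hγ)))
  refine tendsto_nhds_unique (tendsto_kapp_kiter_harmonicPart hE
    (fun _ hy => apply_mul_right_eq_kapp_add_Aop hE (mul_pow_mem hEu n)
      (apply_le_apply_mul_pow hEu hmu n) hharm hy) hx (hfin _ (mul_pow_mem hEu n x hx))) hlim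

end MinimalHarmonic

end RW

theorem statement3_general {G : Type*} [Group G]
    (p : G → G → ℝ≥0∞) (E : Set G)
    (hsupp : ∀ x y, p x y ≠ 0 → x ∈ E ∧ y ∈ E)
    (u : G)
    (hEu : ∀ x ∈ E, x * u ∈ E)
    (hmono : ∀ x ∈ E, ∀ y ∈ E, p x y ≤ p (x * u) (y * u))
    (δ : ℝ≥0∞) (hδ : 0 < δ)
    (hQ : ∀ x ∈ E, δ ≤ hitProb p x (x * u))
    (h : G → ℝ≥0∞) (hfin : ∀ x ∈ E, h x ≠ ⊤) (hne : ∃ x ∈ E, h x ≠ 0)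
    (hharm : ∀ x ∈ E, kapp p h x = h x)
    (hmin : ∀ h' : G → ℝ≥0∞, (∀ x ∈ E, kapp p h' x = h' x) →
      (∀ x ∈ E, h' x ≤ h x) → ∃ c : ℝ≥0∞, ∀ x ∈ E, h' x = c * h x) :
    ∃ γ : ℝ≥0∞, ∀ n : ℕ, 1 ≤ n → ∀ x ∈ E,
      h (x * u ^ n) = γ ^ n * h x + greenApp p (Aop p E (u ^ n) h) x ∧
      greenApp p (Aop p E (u ^ n) h) x =
        ∑ j ∈ Finset.range n, γ ^ j * greenApp p (Aop p E u h) (x * u ^ (n - 1 - j)) := by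
  have hE : ∀ x ∈ E, ∀ y, p x y ≠ 0 → y ∈ E := fun x _ y hxy => (hsupp x y hxy).2
  obtain ⟨γ, hγ, hγh⟩ := exists_harmonicPart_eq_mul hE hEu hmono hδ hQ hfin hne hharm hmin
  have hstep : ∀ x ∈ E, h (x * u) = γ * h x + greenApp p (Aop p E u h) x := fun x hx => by
    rw [← hγh x hx, harmonicPart_add_greenApp_Aop hE hEu hmono hfin hharm hx]
  have hdecomp : ∀ n, ∀ x ∈ E, h (x * u ^ n) = γ ^ n * h x + greenApp p (Aop p E (u ^ n) h) x :=
    fun n x hx => by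
      rw [← harmonicPart_comp_mul_pow_eq hE hEu hmono hfin hharm hγ hstep n hx,
        harmonicPart_add_greenApp_Aop hE (mul_pow_mem hEu n) (apply_le_apply_mul_pow hEu hmono n)
          hfin hharm hx]
  refine ⟨γ, fun n _ x hx => ⟨hdecomp n x hx, ?_⟩⟩
  have hsum := apply_mul_pow_eq hEu hstep n hx
  rw [hdecomp n x hx] at hsum
  exact (ENNReal.add_right_inj (ENNReal.mul_ne_top (ENNReal.pow_ne_top hγ) (hfin x hx))).mp hsum

theorem statement3 {G : Type*} [Group G] [Countable G]
    (p : G → G → ℝ≥0∞) (E : Set G)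
    (hsupp : ∀ x y, p x y ≠ 0 → x ∈ E ∧ y ∈ E)
    (hsub : ∀ x, (∑' y, p x y) ≤ 1)
    (hirr : ∀ x ∈ E, ∀ y ∈ E, 0 < hitProb p x y)
    (htrans : ∀ x ∈ E, green p x x < ⊤)
    (u : G) (hu : u ∈ E)
    (hEu : ∀ x ∈ E, x * u ∈ E)
    (hmono : ∀ x ∈ E, ∀ y ∈ E, p x y ≤ p (x * u) (y * u))
    (δ : ℝ≥0∞) (hδ : 0 < δ)
    (hQ : ∀ x ∈ E, δ ≤ hitProb p x (x * u))
    (h : G → ℝ≥0∞) (hfin : ∀ x ∈ E, h x ≠ ⊤) (hne : ∃ x ∈ E, h x ≠ 0)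
    (hharm : ∀ x ∈ E, kapp p h x = h x)
    (hmin : ∀ h' : G → ℝ≥0∞, (∀ x ∈ E, kapp p h' x = h' x) →
      (∀ x ∈ E, h' x ≤ h x) → ∃ c : ℝ≥0∞, ∀ x ∈ E, h' x = c * h x) :
    ∃ γ : ℝ≥0∞, ∀ n : ℕ, 1 ≤ n → ∀ x ∈ E,
      h (x * u ^ n) = γ ^ n * h x + greenApp p (Aop p E (u ^ n) h) x ∧
      greenApp p (Aop p E (u ^ n) h) x =
        ∑ j ∈ Finset.range n, γ ^ j * greenApp p (Aop p E u h) (x * u ^ (n - 1 - j)) :=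
  statement3_general p E hsupp u hEu hmono δ hδ hQ h hfin hne hharm hmin
end

section
/- Suppose (A0)–(A2) hold and the hitting probabilities are slowly varying along u, i.e. uniformly in x ∈ E, (1/n) log Q(x, x⋆u^{⋆n}) → 0 and (1/n) log Q(x⋆u^{⋆n}, x) → 0 as n → ∞. Then there exists δ > 0 such that Q(x, x⋆u) ≥ δ for all x ∈ E. -/
open scoped ENNReal Classical BigOperators
open Filter

open RW

set_option linter.unusedSectionVars false

section Aux

variable {G : Type*} [Group G] [Countable G]

/-- Partial hitting sums `R_N(x) = ℙ_x(hit z within N-1 steps)`. -/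
noncomputable def Rh (p : G → G → ℝ≥0∞) (z : G) (N : ℕ) (x : G) : ℝ≥0∞ :=
  ∑ m ∈ Finset.range N, fhit p m x z

lemma fhit_zero (p : G → G → ℝ≥0∞) (x z : G) : fhit p 0 x z = 0 := rfl

lemma fhit_one (p : G → G → ℝ≥0∞) (x z : G) : fhit p 1 x z = p x z := rfl

lemma fhit_two (p : G → G → ℝ≥0∞) (n : ℕ) (x z : G) :
    fhit p (n + 2) x z = ∑' w, if w = z then 0 else p x w * fhit p (n + 1) w z := rfl

lemma Rh_rec (p : G → G → ℝ≥0∞) (z : G) (N : ℕ) (x : G) :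
    Rh p z (N + 2) x = p x z + ∑' w, if w = z then 0 else p x w * Rh p z (N + 1) w := by
  unfold Rh
  rw [Finset.sum_range_succ', Finset.sum_range_succ']
  have h1 : ∀ i, fhit p (i + 1 + 1) x z
      = ∑' w, if w = z then 0 else p x w * fhit p (i + 1) w z := fun i => rfl
  simp only [h1, fhit_zero, fhit_one, add_zero]
  rw [← Summable.tsum_finsetSum (fun i _ => ENNReal.summable)]
  rw [add_comm]
  congr 1
  apply tsum_congr
  intro w
  by_cases hw : w = z
  · simp [hw]
  · simp only [hw, if_false]
    rw [Finset.sum_range_succ', fhit_zero, add_zero, Finset.mul_sum]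

lemma Rh_le_one (p : G → G → ℝ≥0∞) (hsub : ∀ x, (∑' y, p x y) ≤ 1) (z : G) :
    ∀ N x, Rh p z N x ≤ 1 := by
  intro N
  induction N with
  | zero => intro x; simp [Rh]
  | succ n ih =>
    match n with
    | 0 => intro x; simp [Rh, fhit_zero]
    | Nat.succ m =>
      intro x
      rw [Rh_rec]
      calc p x z + ∑' w, (if w = z then 0 else p x w * Rh p z (m + 1) w)
          ≤ p x z + ∑' w, (if w = z then 0 else p x w) := by
            gcongr with w
            split_ifs
            · exact le_rfl
            · calc p x w * Rh p z (m + 1) w ≤ p x w * 1 := by gcongr; exact ih w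
                _ = p x w := mul_one _
        _ = ∑' w, p x w := by rw [← ENNReal.tsum_eq_add_tsum_ite z]
        _ ≤ 1 := hsub x

lemma Rh_mono (p : G → G → ℝ≥0∞) (z x : G) : Monotone (fun N => Rh p z N x) := by
  intro a b hab
  exact Finset.sum_le_sum_of_subset (Finset.range_subset_range.2 hab)

/-- Key first-passage decomposition inequality. -/
lemma Rh_submult (p : G → G → ℝ≥0∞) (hsub : ∀ x, (∑' y, p x y) ≤ 1) (y z : G) :
    ∀ K x, (∑ m ∈ Finset.range K, fhit p m x y * Rh p z (K - m) y) ≤ Rh p z K x := by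
  intro K
  induction K with
  | zero => intro x; simp
  | succ n ih =>
    match n with
    | 0 => intro x; simp [fhit_zero]
    | Nat.succ m =>
      intro x
      rw [Finset.sum_range_succ', Finset.sum_range_succ']
      simp only [fhit_zero, zero_mul, add_zero, fhit_one]
      have hidx : ∀ i : ℕ, m + 1 + 1 - (i + 1 + 1) = m - i := by omega
      have hidx2 : m + 1 + 1 - 1 = m + 1 := by omega
      simp only [hidx, hidx2]
      have hterm : ∀ i, fhit p (i + 1 + 1) x y * Rh p z (m - i) y
          = ∑' w, if w = y then 0 else p x w * fhit p (i + 1) w y * Rh p z (m - i) y := by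
        intro i
        rw [fhit_two, ← ENNReal.tsum_mul_right]
        apply tsum_congr; intro w
        split_ifs
        · rw [zero_mul]
        · rw [mul_assoc]
      calc (∑ i ∈ Finset.range m, fhit p (i + 1 + 1) x y * Rh p z (m - i) y)
            + p x y * Rh p z (m + 1) y
          = (∑' w, ∑ i ∈ Finset.range m,
              if w = y then 0 else p x w * fhit p (i + 1) w y * Rh p z (m - i) y)
            + p x y * Rh p z (m + 1) y := by
            rw [Summable.tsum_finsetSum (fun i _ => ENNReal.summable)]
            congr 1
            exact Finset.sum_congr rfl (fun i _ => hterm i)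
        _ ≤ (∑' w, if w = y then 0 else p x w * Rh p z (m + 1) w)
            + p x y * Rh p z (m + 1) y := by
            gcongr with w
            split_ifs with hw
            · simp
            · simp only [mul_assoc]
              rw [← Finset.mul_sum]
              gcongr
              have := ih w
              rw [Finset.sum_range_succ'] at this
              simp only [fhit_zero, zero_mul, add_zero] at this
              have hidx3 : ∀ i : ℕ, m + 1 - (i + 1) = m - i := by omega
              simp only [hidx3] at this
              exact this
        _ = ∑' w, p x w * Rh p z (m + 1) w := by
            rw [add_comm]
            exact (ENNReal.tsum_eq_add_tsum_ite (f := fun w => p x w * Rh p z (m + 1) w) y).symm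
        _ = p x z * Rh p z (m + 1) z
            + ∑' w, if w = z then 0 else p x w * Rh p z (m + 1) w :=
            ENNReal.tsum_eq_add_tsum_ite z
        _ ≤ p x z * 1 + ∑' w, (if w = z then 0 else p x w * Rh p z (m + 1) w) := by
            gcongr
            exact Rh_le_one p hsub z (m + 1) z
        _ = Rh p z (m + 1 + 1) x := by rw [mul_one, ← Rh_rec]

lemma hitProb_eq_iSup (p : G → G → ℝ≥0∞) (x z : G) :
    hitProb p x z = ⨆ N, Rh p z N x := by
  rw [hitProb, ENNReal.tsum_eq_iSup_nat]; rfl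

lemma hitProb_le_one (p : G → G → ℝ≥0∞) (hsub : ∀ x, (∑' y, p x y) ≤ 1) (x z : G) :
    hitProb p x z ≤ 1 := by
  rw [hitProb_eq_iSup]
  exact iSup_le (fun N => Rh_le_one p hsub z N x)

/-- Submultiplicativity of hitting probabilities. -/
lemma hitProb_submult (p : G → G → ℝ≥0∞) (hsub : ∀ x, (∑' y, p x y) ≤ 1)
    (x y z : G) : hitProb p x y * hitProb p y z ≤ hitProb p x z := by
  rw [hitProb_eq_iSup p x y, hitProb_eq_iSup p y z, ENNReal.iSup_mul]
  apply iSup_le; intro N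
  rw [ENNReal.mul_iSup]
  apply iSup_le; intro M
  rw [hitProb_eq_iSup]
  refine le_trans ?_ (le_iSup _ (N + M))
  refine le_trans ?_ (Rh_submult p hsub y z (N + M) x)
  rw [Rh, Finset.sum_mul]
  refine le_trans (Finset.sum_le_sum ?_) (Finset.sum_le_sum_of_subset
    (Finset.range_subset_range.2 (Nat.le_add_right N M)))
  intro i hi
  gcongr
  apply Rh_mono
  have := Finset.mem_range.1 hi
  omega

end Aux


theorem statement4 {G : Type*} [Group G] [Countable G]
    (p : G → G → ℝ≥0∞) (E : Set G)
    (hsupp : ∀ x y, p x y ≠ 0 → x ∈ E ∧ y ∈ E)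
    (hsub : ∀ x, (∑' y, p x y) ≤ 1)
    (hirr : ∀ x ∈ E, ∀ y ∈ E, 0 < hitProb p x y)
    (htrans : ∀ x ∈ E, green p x x < ⊤)
    (u : G) (hu : u ∈ E)
    (hEu : ∀ x ∈ E, x * u ∈ E)
    (hmono : ∀ x ∈ E, ∀ y ∈ E, p x y ≤ p (x * u) (y * u))
    (hsv1 : TendstoUniformlyOn
      (fun (n : ℕ) (x : G) => Real.log ((hitProb p x (x * u ^ n)).toReal) / n)
      (fun _ => 0) atTop E)
    (hsv2 : TendstoUniformlyOn
      (fun (n : ℕ) (x : G) => Real.log ((hitProb p (x * u ^ n) x).toReal) / n)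
      (fun _ => 0) atTop E) :
    ∃ δ : ℝ≥0∞, 0 < δ ∧ ∀ x ∈ E, δ ≤ hitProb p x (x * u) := by
  classical
  have hmem : ∀ (x : G), x ∈ E → ∀ n : ℕ, x * u ^ n ∈ E := by
    intro x hx n
    induction n with
    | zero => simpa using hx
    | succ k ih => rw [pow_succ, ← mul_assoc]; exact hEu _ ih
  have hbound : ∀ (q : ℝ≥0∞) (k : ℕ), 0 < q → q ≤ 1 → 0 < k →
      |Real.log q.toReal / k| < 1 → ENNReal.ofReal (Real.exp (-(k : ℝ))) ≤ q := by
    intro q k hq hq1 hk hlt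
    have hqt : q ≠ ⊤ := (hq1.trans_lt ENNReal.one_lt_top).ne
    have ht : 0 < q.toReal := ENNReal.toReal_pos hq.ne' hqt
    have hkR : (0 : ℝ) < k := by exact_mod_cast hk
    rw [abs_div, abs_of_nonneg hkR.le, div_lt_one hkR] at hlt
    have hgt : -(k : ℝ) < Real.log q.toReal := (abs_lt.1 hlt).1
    have h2 : Real.exp (-(k : ℝ)) ≤ q.toReal := by
      calc Real.exp (-(k : ℝ)) ≤ Real.exp (Real.log q.toReal) := Real.exp_le_exp.2 hgt.le
        _ = q.toReal := Real.exp_log ht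
    calc ENNReal.ofReal (Real.exp (-(k : ℝ))) ≤ ENNReal.ofReal q.toReal :=
          ENNReal.ofReal_le_ofReal h2
      _ = q := ENNReal.ofReal_toReal hqt
  rw [Metric.tendstoUniformlyOn_iff] at hsv1 hsv2
  obtain ⟨N₁, h1⟩ := Filter.eventually_atTop.mp (hsv1 1 one_pos)
  obtain ⟨N₂, h2⟩ := Filter.eventually_atTop.mp (hsv2 1 one_pos)
  set m : ℕ := max N₁ N₂ + 1 with hm
  set n : ℕ := m + 1 with hn
  refine ⟨ENNReal.ofReal (Real.exp (-(n : ℝ)) * Real.exp (-(m : ℝ))), ?_, ?_⟩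
  · exact ENNReal.ofReal_pos.2 (by positivity)
  intro x hx
  have hxn : x * u ^ n ∈ E := hmem x hx n
  have hxu : x * u ∈ E := hEu x hx
  have heq : (x * u) * u ^ m = x * u ^ n := by
    rw [mul_assoc, ← pow_succ']
  have hd1 : |Real.log ((hitProb p x (x * u ^ n)).toReal) / n| < 1 := by
    have := h1 n (by omega) x hx
    rwa [Real.dist_eq, zero_sub, abs_neg] at this
  have hd2 : |Real.log ((hitProb p ((x * u) * u ^ m) (x * u)).toReal) / m| < 1 := by
    have := h2 m (by omega) (x * u) hxu
    rwa [Real.dist_eq, zero_sub, abs_neg] at this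
  have hb1 : ENNReal.ofReal (Real.exp (-(n : ℝ))) ≤ hitProb p x (x * u ^ n) :=
    hbound _ n (hirr x hx _ hxn) (hitProb_le_one p hsub _ _) (by omega) hd1
  have hb2 : ENNReal.ofReal (Real.exp (-(m : ℝ))) ≤ hitProb p (x * u ^ n) (x * u) := by
    rw [← heq]
    exact hbound _ m (hirr _ (heq ▸ hxn) _ hxu) (hitProb_le_one p hsub _ _) (by omega)
      hd2
  calc ENNReal.ofReal (Real.exp (-(n : ℝ)) * Real.exp (-(m : ℝ)))
      = ENNReal.ofReal (Real.exp (-(n : ℝ))) * ENNReal.ofReal (Real.exp (-(m : ℝ))) :=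
        ENNReal.ofReal_mul (Real.exp_nonneg _)
    _ ≤ hitProb p x (x * u ^ n) * hitProb p (x * u ^ n) (x * u) := mul_le_mul' hb1 hb2
    _ ≤ hitProb p x (x * u) := hitProb_submult p hsub _ _ _
end

section
/- Suppose (A0) and (A1) hold and for some u ∈ E one has E⋆u ⊆ E and p(x⋆u, y⋆u) = p(x,y) for all x,y ∈ E. Let η_u = inf{t ≥ 1 : X(t) ∉ E⋆u} and τ_ϑ the killing time. Then for every nonnegative h : E → ℝ₊ (with h(ϑ) := 0), G A_u h (y) = 𝔼_{y⋆u}[ h(X(η_u)) ; η_u < τ_ϑ ≤ +∞ ] for all y ∈ E. -/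
open scoped ENNReal Classical BigOperators
open Filter

open RW

private lemma kiter_mem {G : Type*} [Group G] [Countable G]
    (p : G → G → ℝ≥0∞) (E : Set G)
    (hsupp : ∀ x y, p x y ≠ 0 → x ∈ E ∧ y ∈ E) :
    ∀ n, ∀ y ∈ E, ∀ x, kiter p n y x ≠ 0 → x ∈ E := by
  intro n
  induction n with
  | zero =>
    intro y hy x hx
    simp only [kiter] at hx
    split at hx
    · next heq => exact heq ▸ hy
    · exact absurd rfl hx
  | succ n ih =>
    intro y hy x hx
    simp only [kiter] at hx
    by_contra hxE
    apply hx
    refine ENNReal.tsum_eq_zero.mpr fun z => ?_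
    by_cases hpz : p y z = 0
    · simp [hpz]
    · have hzE := (hsupp y z hpz).2
      have hk : kiter p n z x = 0 := by
        by_contra hk; exact hxE (ih z hzE x hk)
      simp [hk]

private lemma ker_q {G : Type*} [Group G] [Countable G]
    (p : G → G → ℝ≥0∞) (E : Set G)
    (hsupp : ∀ x y, p x y ≠ 0 → x ∈ E ∧ y ∈ E)
    (u : G)
    (heq : ∀ x ∈ E, ∀ y ∈ E, p (x * u) (y * u) = p x y) :
    ∀ n, ∀ y ∈ E, ∀ w,
      kiter (fun a b => if b * u⁻¹ ∈ E then p a b else 0) n (y * u) w =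
        if w * u⁻¹ ∈ E then kiter p n y (w * u⁻¹) else 0 := by
  intro n
  induction n with
  | zero =>
    intro y hy w
    simp only [kiter]
    by_cases hw : y * u = w
    · subst hw
      simp [hy]
    · have hne : y ≠ w * u⁻¹ := by
        intro hh
        apply hw
        rw [hh, inv_mul_cancel_right]
      simp [hw, hne]
  | succ n ih =>
    intro y hy w
    show (∑' b, (if b * u⁻¹ ∈ E then p (y * u) b else 0) *
        kiter (fun a b => if b * u⁻¹ ∈ E then p a b else 0) n b w) = _
    rw [← (Equiv.mulRight u).tsum_eq]
    have hterm : ∀ c : G,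
        (if (Equiv.mulRight u c) * u⁻¹ ∈ E then p (y * u) (Equiv.mulRight u c) else 0) *
          kiter (fun a b => if b * u⁻¹ ∈ E then p a b else 0) n (Equiv.mulRight u c) w
        = p y c * (if w * u⁻¹ ∈ E then kiter p n c (w * u⁻¹) else 0) := by
      intro c
      simp only [Equiv.coe_mulRight, mul_inv_cancel_right]
      by_cases hc : c ∈ E
      · rw [ih c hc w, heq y hy c hc]
        simp [hc]
      · have hp : p y c = 0 := by
          by_contra hp; exact hc (hsupp y c hp).2
        simp [hc, hp]
    rw [tsum_congr hterm]
    by_cases hw : w * u⁻¹ ∈ E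
    · simp only [hw, if_true]
      rfl
    · simp [hw]

theorem statement6 {G : Type*} [Group G] [Countable G]
    (p : G → G → ℝ≥0∞) (E : Set G)
    (hsupp : ∀ x y, p x y ≠ 0 → x ∈ E ∧ y ∈ E)
    (hsub : ∀ x, (∑' y, p x y) ≤ 1)
    (hirr : ∀ x ∈ E, ∀ y ∈ E, 0 < hitProb p x y)
    (htrans : ∀ x ∈ E, green p x x < ⊤)
    (u : G) (hu : u ∈ E)
    (hEu : ∀ x ∈ E, x * u ∈ E)
    (heq : ∀ x ∈ E, ∀ y ∈ E, p (x * u) (y * u) = p x y)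
    (h : G → ℝ≥0∞) :
    ∀ y ∈ E,
      greenApp p (Aop p E u h) y =
        ∑' (n : ℕ), ∑' (w : G),
          kiter (fun a b => if b * u⁻¹ ∈ E then p a b else 0) n (y * u) w *
            (∑' z, if z * u⁻¹ ∈ E then 0 else p w z * h z) := by
  intro y hy
  set f : G → ℝ≥0∞ := fun w => ∑' z, if z * u⁻¹ ∈ E then 0 else p w z * h z with hf
  -- Rewrite RHS using the kernel identity and reindexing
  have hRHS : (∑' (n : ℕ), ∑' (w : G),
      kiter (fun a b => if b * u⁻¹ ∈ E then p a b else 0) n (y * u) w * f w)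
      = ∑' (x : G), green p y x * f (x * u) := by
    have step1 : ∀ n : ℕ, (∑' (w : G),
        kiter (fun a b => if b * u⁻¹ ∈ E then p a b else 0) n (y * u) w * f w)
        = ∑' (x : G), kiter p n y x * f (x * u) := by
      intro n
      rw [← (Equiv.mulRight u).tsum_eq]
      refine tsum_congr fun x => ?_
      simp only [Equiv.coe_mulRight]
      rw [ker_q p E hsupp u heq n y hy (x * u)]
      simp only [mul_inv_cancel_right]
      by_cases hx : x ∈ E
      · simp [hx]
      · have hk : kiter p n y x = 0 := by
          by_contra hk; exact hx (kiter_mem p E hsupp n y hy x hk)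
        simp [hx, hk]
    rw [tsum_congr step1, ENNReal.tsum_comm]
    refine tsum_congr fun x => ?_
    rw [ENNReal.tsum_mul_right]
    rfl
  rw [hRHS]
  -- Rewrite LHS termwise
  unfold greenApp
  refine tsum_congr fun x => ?_
  by_cases hx : x ∈ E
  · congr 1
    unfold Aop f
    refine tsum_congr fun z => ?_
    unfold acoef
    by_cases hz : z * u⁻¹ ∈ E
    · have : p (x * u) z = p x (z * u⁻¹) := by
        have := heq x hx (z * u⁻¹) hz
        rwa [inv_mul_cancel_right] at this
      simp [hz, this, tsub_self]
    · simp [hz]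
  · have hg : green p y x = 0 := by
      unfold green
      refine ENNReal.tsum_eq_zero.mpr fun n => ?_
      by_contra hk; exact hx (kiter_mem p E hsupp n y hy x hk)
    simp [hg]
end

section
/- Under (A0), (B1), (B2), the ladder transition probabilities satisfy p_H(x⋆u, y⋆u) = p_H(x,y) + G T_x A_u 𝟙_{{y⋆u}}(e) ≥ p_H(x,y) for all x, y, u ∈ E. -/
open scoped ENNReal Classical BigOperators
open Filter

open RW

theorem statement9 {G : Type*} [Group G] [Countable G]
    (p : G → G → ℝ≥0∞) (E : Set G)
    (hsupp : ∀ x y, p x y ≠ 0 → x ∈ E ∧ y ∈ E)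
    (hsub : ∀ x, (∑' y, p x y) ≤ 1)
    (hirr : ∀ x ∈ E, ∀ y ∈ E, 0 < hitProb p x y)
    (htrans : ∀ x ∈ E, green p x x < ⊤)
    (hone : (1 : G) ∈ E)
    (hmul : ∀ x ∈ E, ∀ y ∈ E, x * y ∈ E)
    (hmono : ∀ x ∈ E, ∀ y ∈ E, ∀ u ∈ E, p x y ≤ p (x * u) (y * u)) :
    ∀ x ∈ E, ∀ y ∈ E, ∀ u ∈ E,
      ladder p E (x * u) (y * u) =
        ladder p E x y + ∑' z, green p 1 z * acoef p E u (z * x) (y * u) ∧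
      ladder p E x y ≤ ladder p E (x * u) (y * u) := by
  intro x hx y hy u hu
  have key : ∀ z : G, acoef p E (x * u) z (y * u) =
      acoef p E x z y + acoef p E u (z * x) (y * u) := by
    intro z
    have h2 : p (z * x) y ≤ p (z * x * u) (y * u) := by
      by_cases h0 : p (z * x) y = 0
      · simp [h0]
      · exact hmono (z * x) ((hsupp _ _ h0).1) y hy u hu
    have e1 : (y * u) * (x * u)⁻¹ = y * x⁻¹ := by group
    have e2 : (y * u) * u⁻¹ = y := by group
    have e3 : z * (x * u) = z * x * u := by group
    simp only [acoef, e1, e2, e3, if_pos hy]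
    by_cases hin : y * x⁻¹ ∈ E
    · have h1 : p z (y * x⁻¹) ≤ p (z * x) y := by
        by_cases h0 : p z (y * x⁻¹) = 0
        · simp [h0]
        · have := hmono z ((hsupp _ _ h0).1) (y * x⁻¹) hin x hx
          simpa using this
      rw [if_pos hin, if_pos hin, add_comm, tsub_add_tsub_cancel h2 h1]
    · rw [if_neg hin, if_neg hin, add_tsub_cancel_of_le h2]
  have hEq : ladder p E (x * u) (y * u) =
      ladder p E x y + ∑' z, green p 1 z * acoef p E u (z * x) (y * u) := by
    unfold ladder
    simp_rw [key, mul_add]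
    exact ENNReal.tsum_add
  exact ⟨hEq, hEq ▸ le_self_add⟩
end

section
/- Under (C0'), (C1'), (C2') (step generating function R finite near D = {α : R(α) ≤ 1} and nonzero mean), for every α ∈ D and all sequences (u_n), (v_n) in E with u_n/n → u and v_n/n → v, one has limsup_{n→∞} (1/n) log G(u_n, v_n) ≤ −⟨α, v − u⟩, where G is the Green function of the random walk killed on exiting the cone. -/
/-! For `β` with `Rgen μ β ≤ 1` the tilted kernel `p x y * e^{⟨β, y - x⟩}` is substochastic, and
its `n`-step kernel is bounded by `Rgen μ β ^ n`. When `Rgen μ β < 1`, summing the geometric series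
gives `G(x, y) ≤ (1 - Rgen μ β)⁻¹ * e^{⟨β, x - y⟩}`, hence
`limsup (1/n) log G(uₙ, vₙ) ≤ -⟨β, v - u⟩`. Such `β` exist because the mean is nonzero: `Rgen μ`
equals `1` at `0` and decreases strictly in the direction opposite to a nonzero component of the
mean. By convexity of `Rgen μ`, every `α` with `Rgen μ α ≤ 1` is a limit of such `β`, and the
bound is continuous in `β`. Finally, the communication paths give `G(x, y) ≥ ρ ^ (κ |y - x|)`,
which keeps `log G` away from its junk value at `0` and bounds `(1/n) log G(uₙ, vₙ)` from below,
so that the `limsup` is the genuine one. -/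

open scoped ENNReal Classical BigOperators
open Filter

noncomputable section

namespace RW

/-- Euclidean norm on `Fin d → ℝ`. -/
def rnorm {d : ℕ} (x : Fin d → ℝ) : ℝ := Real.sqrt (∑ i, (x i) ^ 2)

/-- Embedding of the lattice `ℤ^d` into `ℝ^d`. -/
def toR {d : ℕ} (x : Fin d → ℤ) : Fin d → ℝ := fun i => (x i : ℝ)

/-- Jump generating function `R(α) = Σ_x μ(x) e^{⟨α,x⟩}`. -/
def Rgen {d : ℕ} (μ : (Fin d → ℤ) → ℝ≥0∞) (α : Fin d → ℝ) : ℝ≥0∞ :=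
  ∑' x : Fin d → ℤ, μ x * ENNReal.ofReal (Real.exp (∑ i, α i * (x i : ℝ)))

end RW

end

open Real Topology

namespace RW

lemma exp_le_one_add_add_sq_mul_exp_abs (y : ℝ) : exp y ≤ 1 + y + y ^ 2 * exp |y| := by
  have h1 : 1 ≤ exp |y| := one_le_exp (abs_nonneg y)
  rcases le_or_gt |y| 1 with hy | hy
  · nlinarith [(abs_le.1 (abs_exp_sub_one_sub_id_le hy)).2, sq_nonneg y]
  rcases le_or_gt 0 y with hy0 | hy0
  · rw [abs_of_nonneg hy0] at hy ⊢
    have hy2 : 1 ≤ y ^ 2 := by nlinarith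
    nlinarith [mul_le_mul_of_nonneg_right hy2 (exp_pos y).le]
  · rw [abs_of_neg hy0] at hy
    nlinarith [exp_le_one_iff.2 hy0.le]

lemma exp_abs_le_exp_add_exp_neg (y : ℝ) : exp |y| ≤ exp y + exp (-y) := by
  rcases abs_cases y with ⟨h, _⟩ | ⟨h, _⟩ <;> rw [h] <;> linarith [exp_pos y, exp_pos (-y)]

lemma exp_mul_le_quadratic {t : ℝ} (ht0 : 0 ≤ t) (ht1 : t ≤ 1) (y : ℝ) :
    exp (t * y) ≤ 1 + t * y + 2 * t ^ 2 * (exp (2 * y) + exp (-(2 * y))) := by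
  have hsq : y ^ 2 ≤ 2 * exp |y| := by
    have := pow_div_factorial_le_exp |y| (abs_nonneg y) 2
    rw [sq_abs] at this
    norm_num at this
    linarith
  have hty : exp |t * y| ≤ exp |y| := by
    rw [abs_mul, abs_of_nonneg ht0]
    exact exp_le_exp.2 (mul_le_of_le_one_left (abs_nonneg y) ht1)
  have h2y : exp |y| * exp |y| ≤ exp (2 * y) + exp (-(2 * y)) := by
    rw [← exp_add, ← two_mul, ← abs_two, ← abs_mul, abs_two]
    exact exp_abs_le_exp_add_exp_neg _
  calc exp (t * y) ≤ 1 + t * y + t ^ 2 * (y ^ 2 * exp |t * y|) := by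
        have := exp_le_one_add_add_sq_mul_exp_abs (t * y)
        rwa [mul_pow, mul_assoc] at this
    _ ≤ 1 + t * y + t ^ 2 * (2 * exp |y| * exp |y|) := by gcongr
    _ ≤ 1 + t * y + 2 * t ^ 2 * (exp (2 * y) + exp (-(2 * y))) := by nlinarith

lemma summable_mul_of_summable_mul_exp {X : Type*} {w f : X → ℝ} (hw : ∀ x, 0 ≤ w x)
    {a : ℝ} (ha : 0 < a) (hpos : Summable fun x => w x * exp (a * f x))
    (hneg : Summable fun x => w x * exp (-(a * f x))) :
    Summable fun x => w x * f x := by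
  refine Summable.of_norm_bounded ((hpos.add hneg).mul_left a⁻¹) fun x => ?_
  have hf : |f x| ≤ a⁻¹ * (exp (a * f x) + exp (-(a * f x))) := by
    rw [le_inv_mul_iff₀ ha, ← abs_of_pos ha, ← abs_mul, abs_of_pos ha]
    linarith [add_one_le_exp |a * f x|, exp_abs_le_exp_add_exp_neg (a * f x)]
  rw [Real.norm_eq_abs, abs_mul, abs_of_nonneg (hw x)]
  calc w x * |f x| ≤ w x * (a⁻¹ * (exp (a * f x) + exp (-(a * f x)))) := by gcongr; exact hw x
    _ = _ := by ring

/-- Tilting a probability weight by `exp (-s f)` changes its mass to `1 - s M + O(s²)`, where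
`M > 0` is the mean of `f`. -/
lemma exists_tsum_mul_exp_neg_lt_one {X : Type*} {w f : X → ℝ} (hw : ∀ x, 0 ≤ w x)
    (hw1 : HasSum w 1) {a : ℝ} (ha : 0 < a) (hpos : Summable fun x => w x * exp (a * f x))
    (hneg : Summable fun x => w x * exp (-(a * f x))) (hmean : 0 < ∑' x, w x * f x) :
    ∃ s, Summable (fun x => w x * exp (-(s * f x))) ∧ ∑' x, w x * exp (-(s * f x)) < 1 := by
  set M := ∑' x, w x * f x
  have hwf := summable_mul_of_summable_mul_exp hw ha hpos hneg
  set K := ∑' x, (w x * exp (a * f x) + w x * exp (-(a * f x)))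
  have hK : 0 ≤ K := tsum_nonneg fun x => by have := hw x; positivity
  obtain ⟨t, ht0, ht1, htK⟩ : ∃ t : ℝ, 0 < t ∧ t ≤ 1 ∧ 2 * t * K < a / 2 * M := by
    refine ⟨min 1 (a / 2 * M / (2 * K + 1)), lt_min one_pos (by positivity), min_le_left _ _, ?_⟩
    have h := (le_div_iff₀ (by positivity)).1 (min_le_right 1 (a / 2 * M / (2 * K + 1)))
    nlinarith [lt_min one_pos (show 0 < a / 2 * M / (2 * K + 1) by positivity)]
  have hbound : ∀ x, w x * exp (-(t * a / 2 * f x)) ≤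
      w x - t * (a / 2) * (w x * f x) +
        2 * t ^ 2 * (w x * exp (a * f x) + w x * exp (-(a * f x))) := by
    intro x
    have := exp_mul_le_quadratic ht0.le ht1 (-(a / 2 * f x))
    rw [show 2 * -(a / 2 * f x) = -(a * f x) by ring, neg_neg,
      show t * -(a / 2 * f x) = -(t * a / 2 * f x) by ring] at this
    have := mul_le_mul_of_nonneg_left this (hw x)
    linarith [mul_add (w x) (exp (a * f x)) (exp (-(a * f x)))]
  have hsum_rhs : Summable fun x => w x - t * (a / 2) * (w x * f x) +
      2 * t ^ 2 * (w x * exp (a * f x) + w x * exp (-(a * f x))) :=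
    (hw1.summable.sub (hwf.mul_left _)).add ((hpos.add hneg).mul_left _)
  have hsum : Summable fun x => w x * exp (-(t * a / 2 * f x)) :=
    Summable.of_nonneg_of_le (fun x => mul_nonneg (hw x) (exp_pos _).le) hbound hsum_rhs
  refine ⟨t * a / 2, hsum, ?_⟩
  calc ∑' x, w x * exp (-(t * a / 2 * f x))
      ≤ ∑' x, (w x - t * (a / 2) * (w x * f x) +
          2 * t ^ 2 * (w x * exp (a * f x) + w x * exp (-(a * f x)))) :=
        hsum.tsum_le_tsum hbound hsum_rhs
    _ = 1 - t * (a / 2) * M + 2 * t ^ 2 * K := by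
        rw [(hw1.summable.sub (hwf.mul_left _)).tsum_add ((hpos.add hneg).mul_left _),
          hw1.summable.tsum_sub (hwf.mul_left _), hw1.tsum_eq, tsum_mul_left, tsum_mul_left]
    _ < 1 := by
        have : 2 * t ^ 2 * K < t * (a / 2) * M := by
          have := mul_lt_mul_of_pos_left htK ht0
          linarith
        linarith

section Kernel

variable {G : Type*} (p : G → G → ℝ≥0∞)

lemma kiter_le_green (n : ℕ) (x y : G) : kiter p n x y ≤ green p x y := ENNReal.le_tsum n

lemma pow_le_kiter_of_path {ρ : ℝ≥0∞} (m : ℕ) (f : ℕ → G)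
    (hf : ∀ j < m, ρ ≤ p (f j) (f (j + 1))) : ρ ^ m ≤ kiter p m (f 0) (f m) := by
  induction m generalizing f with
  | zero => simp [kiter]
  | succ m ih =>
    calc ρ ^ (m + 1) = ρ * ρ ^ m := pow_succ' ρ m
      _ ≤ p (f 0) (f 1) * kiter p m (f 1) (f (m + 1)) :=
          mul_le_mul' (hf 0 m.succ_pos) (ih (fun j => f (j + 1)) fun j hj => hf (j + 1) (by omega))
      _ ≤ kiter p (m + 1) (f 0) (f (m + 1)) := ENNReal.le_tsum (f 1)

end Kernel

variable {d : ℕ} {μ : (Fin d → ℤ) → ℝ≥0∞} {p : (Fin d → ℤ) → (Fin d → ℤ) → ℝ≥0∞}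

lemma toR_sub (x y : Fin d → ℤ) : toR (x - y) = toR x - toR y := by
  ext i; simp [toR]

lemma rnorm_eq_norm (x : Fin d → ℝ) : rnorm x = ‖WithLp.toLp 2 x‖ := by
  simp [rnorm, EuclideanSpace.norm_eq]

lemma rnorm_smul (c : ℝ) (x : Fin d → ℝ) : rnorm (c • x) = |c| * rnorm x := by
  rw [rnorm_eq_norm, rnorm_eq_norm, WithLp.toLp_smul, norm_smul, Real.norm_eq_abs]

lemma continuous_rnorm : Continuous (rnorm (d := d)) := by
  simp_rw [funext rnorm_eq_norm]
  exact continuous_norm.comp (PiLp.continuous_toLp 2 _)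

noncomputable def expTilt (β : Fin d → ℝ) (x : Fin d → ℤ) : ℝ≥0∞ :=
  ENNReal.ofReal (exp (β ⬝ᵥ toR x))

lemma expTilt_add (β : Fin d → ℝ) (x y : Fin d → ℤ) :
    expTilt β (x + y) = expTilt β x * expTilt β y := by
  have : toR (x + y) = toR x + toR y := by ext i; simp [toR]
  rw [expTilt, this, dotProduct_add, Real.exp_add, ENNReal.ofReal_mul (Real.exp_nonneg _)]
  rfl

lemma Rgen_eq_tsum_expTilt (β : Fin d → ℝ) :
    Rgen μ β = ∑' x, μ x * expTilt β x := rfl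

lemma kiter_le_Rgen_pow_mul_expTilt (hp : ∀ x y, p x y ≤ μ (y - x)) (β : Fin d → ℝ) (n : ℕ)
    (x y : Fin d → ℤ) : kiter p n x y ≤ Rgen μ β ^ n * expTilt β (x - y) := by
  induction n generalizing x with
  | zero =>
    by_cases h : x = y
    · rw [h, sub_self, expTilt, show toR (0 : Fin d → ℤ) = 0 by ext; simp [toR]]
      simp [kiter]
    · simp [kiter, h]
  | succ n ih =>
    have hshift : ∑' z, μ (z - x) * expTilt β (z - x) = Rgen μ β :=
      (Equiv.subRight x).tsum_eq fun z => μ z * expTilt β z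
    calc kiter p (n + 1) x y = ∑' z, p x z * kiter p n z y := rfl
      _ ≤ ∑' z, μ (z - x) * (Rgen μ β ^ n * expTilt β (z - y)) :=
          ENNReal.tsum_le_tsum fun z => mul_le_mul' (hp x z) (ih z)
      _ = ∑' z, μ (z - x) * expTilt β (z - x) * (Rgen μ β ^ n * expTilt β (x - y)) := by
          refine tsum_congr fun z => ?_
          rw [show z - y = (z - x) + (x - y) by abel, expTilt_add]
          ring
      _ = Rgen μ β ^ (n + 1) * expTilt β (x - y) := by
          rw [ENNReal.tsum_mul_right, hshift]
          ring

lemma green_le (hp : ∀ x y, p x y ≤ μ (y - x)) (β : Fin d → ℝ) (x y : Fin d → ℤ) :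
    green p x y ≤ (1 - Rgen μ β)⁻¹ * expTilt β (x - y) := by
  calc green p x y ≤ ∑' n : ℕ, Rgen μ β ^ n * expTilt β (x - y) :=
        ENNReal.tsum_le_tsum fun n => kiter_le_Rgen_pow_mul_expTilt hp β n x y
    _ = (1 - Rgen μ β)⁻¹ * expTilt β (x - y) := by
        rw [ENNReal.tsum_mul_right, ENNReal.tsum_geometric]

lemma green_ne_top (hp : ∀ x y, p x y ≤ μ (y - x)) {β : Fin d → ℝ} (hβ : Rgen μ β < 1)
    (x y : Fin d → ℤ) : green p x y ≠ ⊤ :=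
  ne_top_of_le_ne_top (ENNReal.mul_ne_top (ENNReal.inv_ne_top.2 (tsub_pos_iff_lt.2 hβ).ne')
    ENNReal.ofReal_ne_top) (green_le hp β x y)

lemma Rgen_zero (hμ : ∑' z, μ z = 1) : Rgen μ 0 = 1 := by
  simp [Rgen, hμ]

lemma mul_expTilt_eq_ofReal (hμ : ∀ x, μ x ≠ ⊤) (β : Fin d → ℝ) (x : Fin d → ℤ) :
    μ x * expTilt β x = ENNReal.ofReal ((μ x).toReal * exp (β ⬝ᵥ toR x)) := by
  rw [ENNReal.ofReal_mul ENNReal.toReal_nonneg, ENNReal.ofReal_toReal (hμ x), expTilt]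

lemma Rgen_eq_ofReal_tsum (hμ : ∀ x, μ x ≠ ⊤) {β : Fin d → ℝ}
    (hs : Summable fun x => (μ x).toReal * exp (β ⬝ᵥ toR x)) :
    Rgen μ β = ENNReal.ofReal (∑' x, (μ x).toReal * exp (β ⬝ᵥ toR x)) := by
  rw [ENNReal.ofReal_tsum_of_nonneg (fun x => by positivity) hs, Rgen_eq_tsum_expTilt]
  exact tsum_congr (mul_expTilt_eq_ofReal hμ β)

lemma summable_of_Rgen_ne_top (hμ : ∀ x, μ x ≠ ⊤) {β : Fin d → ℝ} (h : Rgen μ β ≠ ⊤) :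
    Summable fun x => (μ x).toReal * exp (β ⬝ᵥ toR x) := by
  rw [Rgen_eq_tsum_expTilt] at h
  refine (ENNReal.summable_toReal h).congr fun x => ?_
  rw [mul_expTilt_eq_ofReal hμ, ENNReal.toReal_ofReal (by positivity)]

/-- If `m ≠ 0` is the `i`-th component of the mean, then `c ↦ Rgen μ (Pi.single i (c * m))` has
derivative `m ^ 2 > 0` at `0`. -/
lemma exists_Rgen_lt_one (hμ : ∑' z, μ z = 1) (hfin : ∀ᶠ β in 𝓝 0, Rgen μ β < ⊤)
    (hmean : (fun i => ∑' x : Fin d → ℤ, (μ x).toReal * (x i : ℝ)) ≠ 0) :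
    ∃ β, Rgen μ β < 1 := by
  obtain ⟨i, hi⟩ := Function.ne_iff.1 hmean
  set m := ∑' x : Fin d → ℤ, (μ x).toReal * (x i : ℝ)
  have hμtop : ∀ x, μ x ≠ ⊤ := fun x =>
    ne_top_of_le_ne_top (by simp [hμ]) (ENNReal.le_tsum x)
  have hdir : ∀ (c : ℝ) (x : Fin d → ℤ), Pi.single i (c * m) ⬝ᵥ toR x = c * (m * x i) := by
    intro c x
    rw [single_dotProduct, mul_assoc]
    rfl
  have hline : Tendsto (fun c : ℝ => Pi.single (M := fun _ => ℝ) i (c * m)) (𝓝 0) (𝓝 0) := by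
    refine Continuous.tendsto' ?_ 0 0 (by simp)
    exact (continuous_single i).comp (continuous_mul_const m)
  obtain ⟨ε, hε, hball⟩ := Metric.eventually_nhds_iff.1 (hline.eventually hfin)
  have hsum : ∀ c : ℝ, |c| < ε → Summable fun x => (μ x).toReal * exp (c * (m * x i)) := by
    intro c hc
    simpa only [hdir] using summable_of_Rgen_ne_top hμtop (hball (by simpa using hc)).ne
  have hw1 : HasSum (fun x => (μ x).toReal) 1 := by
    have h := (ENNReal.summable_toReal (f := μ) (by simp [hμ])).hasSum
    rwa [← ENNReal.tsum_toReal_eq hμtop, hμ, ENNReal.toReal_one] at h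
  have hε2 : |ε / 2| < ε := by rw [abs_of_pos (half_pos hε)]; exact half_lt_self hε
  obtain ⟨s, hs, hs1⟩ := exists_tsum_mul_exp_neg_lt_one (w := fun x => (μ x).toReal)
    (f := fun x => m * x i)
    (fun x => ENNReal.toReal_nonneg) hw1 (half_pos hε) (hsum _ hε2)
    (by simpa only [neg_mul] using hsum (-(ε / 2)) (by rwa [abs_neg]))
    (by simp_rw [mul_left_comm _ m]; rw [tsum_mul_left]; exact mul_self_pos.2 hi)
  have htilt : ∀ x : Fin d → ℤ, Pi.single i (-s * m) ⬝ᵥ toR x = -(s * (m * x i)) := fun x => by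
    rw [hdir, neg_mul]
  refine ⟨Pi.single i (-s * m), ?_⟩
  rw [Rgen_eq_ofReal_tsum hμtop (by simpa only [htilt] using hs), ENNReal.ofReal_lt_one]
  simpa only [htilt] using hs1

lemma Rgen_convex_comb_le (α β : Fin d → ℝ) {t : ℝ} (ht0 : 0 ≤ t) (ht1 : t ≤ 1) :
    Rgen μ ((1 - t) • α + t • β) ≤
      ENNReal.ofReal (1 - t) * Rgen μ α + ENNReal.ofReal t * Rgen μ β := by
  have htilt : ∀ x, expTilt ((1 - t) • α + t • β) x ≤
      ENNReal.ofReal (1 - t) * expTilt α x + ENNReal.ofReal t * expTilt β x := by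
    intro x
    rw [expTilt, expTilt, expTilt, ← ENNReal.ofReal_mul (by linarith), ← ENNReal.ofReal_mul ht0,
      ← ENNReal.ofReal_add (by positivity) (by positivity), add_dotProduct, smul_dotProduct,
      smul_dotProduct]
    exact ENNReal.ofReal_le_ofReal
      (convexOn_exp.2 (Set.mem_univ _) (Set.mem_univ _) (by linarith) ht0 (by ring))
  calc Rgen μ ((1 - t) • α + t • β) = ∑' x, μ x * expTilt ((1 - t) • α + t • β) x := rfl
    _ ≤ ∑' x, (ENNReal.ofReal (1 - t) * (μ x * expTilt α x) +
          ENNReal.ofReal t * (μ x * expTilt β x)) := ENNReal.tsum_le_tsum fun x => by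
        calc μ x * expTilt ((1 - t) • α + t • β) x
            ≤ μ x * (ENNReal.ofReal (1 - t) * expTilt α x + ENNReal.ofReal t * expTilt β x) := by
              gcongr; exact htilt x
          _ = _ := by ring
    _ = ENNReal.ofReal (1 - t) * Rgen μ α + ENNReal.ofReal t * Rgen μ β := by
        rw [ENNReal.tsum_add, ENNReal.tsum_mul_left, ENNReal.tsum_mul_left]
        rfl

lemma mem_closure_setOf_Rgen_lt_one {α β : Fin d → ℝ} (hα : Rgen μ α ≤ 1) (hβ : Rgen μ β < 1) :
    α ∈ closure {γ | Rgen μ γ < 1} := by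
  have hlim : Tendsto (fun t : ℝ => (1 - t) • α + t • β) (𝓝[>] 0) (𝓝 α) :=
    (Continuous.tendsto' (by fun_prop) 0 α (by simp)).mono_left nhdsWithin_le_nhds
  refine mem_closure_of_tendsto hlim (eventually_of_mem (Ioc_mem_nhdsGT one_pos) ?_)
  rintro t ⟨ht0, ht1⟩
  have ht : ENNReal.ofReal t ≠ 0 := (ENNReal.ofReal_pos.2 ht0).ne'
  calc Rgen μ ((1 - t) • α + t • β)
      ≤ ENNReal.ofReal (1 - t) * Rgen μ α + ENNReal.ofReal t * Rgen μ β :=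
        Rgen_convex_comb_le α β ht0.le ht1
    _ < ENNReal.ofReal (1 - t) * 1 + ENNReal.ofReal t * 1 :=
        ENNReal.add_lt_add_of_le_of_lt
          (ENNReal.mul_ne_top ENNReal.ofReal_ne_top (ne_top_of_le_ne_top ENNReal.one_ne_top hα))
          (by gcongr)
          ((ENNReal.mul_lt_mul_iff_right ht ENNReal.ofReal_ne_top).2 hβ)
    _ = 1 := by
        rw [mul_one, mul_one, ← ENNReal.ofReal_add (by linarith) ht0.le]
        simp

lemma exists_pow_le_green {E : Set (Fin d → ℤ)} (hp : ∀ x ∈ E, ∀ y ∈ E, p x y = μ (y - x))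
    {S : Set (Fin d → ℤ)} (hSfin : S.Finite) (hSsupp : ∀ z ∈ S, μ z ≠ 0) {κ : ℝ}
    (hcomm : ∀ x ∈ E, ∀ y ∈ E, x ≠ y → ∃ (m : ℕ) (f : ℕ → Fin d → ℤ),
      f 0 = x ∧ f m = y ∧ (m : ℝ) ≤ κ * rnorm (toR (y - x)) ∧
      (∀ j ≤ m, f j ∈ E) ∧ ∀ j < m, f (j + 1) - f j ∈ S) :
    ∃ ρ : ℝ≥0∞, 0 < ρ ∧ ρ ≤ 1 ∧ ∀ x ∈ E, ∀ y ∈ E,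
      ∃ m : ℕ, (m : ℝ) ≤ κ * rnorm (toR (y - x)) ∧ ρ ^ m ≤ green p x y := by
  refine ⟨hSfin.toFinset.inf μ ⊓ 1, lt_inf_iff.2 ⟨?_, one_pos⟩, inf_le_right, fun x hx y hy => ?_⟩
  · exact (Finset.lt_inf_iff ENNReal.zero_lt_top).2 fun z hz =>
      pos_iff_ne_zero.2 (hSsupp z (hSfin.mem_toFinset.1 hz))
  by_cases hxy : x = y
  · subst hxy
    exact ⟨0, by simp [toR, rnorm], by simpa [kiter] using kiter_le_green p 0 x x⟩
  obtain ⟨m, f, rfl, rfl, hm, hfE, hfS⟩ := hcomm x hx y hy hxy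
  refine ⟨m, hm, (pow_le_kiter_of_path p m f fun j hj => ?_).trans (kiter_le_green p m _ _)⟩
  rw [hp _ (hfE j hj.le) _ (hfE (j + 1) hj)]
  exact inf_le_left.trans (Finset.inf_le (hSfin.mem_toFinset.2 (hfS j hj)))

lemma mul_log_toReal_le_log_toReal {ρ g : ℝ≥0∞} {m : ℕ} {r : ℝ} (hρ0 : 0 < ρ) (hρ1 : ρ ≤ 1)
    (hg : g ≠ ⊤) (hm : (m : ℝ) ≤ r) (h : ρ ^ m ≤ g) :
    r * log ρ.toReal ≤ log g.toReal := by
  have hρ : 0 < ρ.toReal := ENNReal.toReal_pos hρ0.ne' (ne_top_of_le_ne_top ENNReal.one_ne_top hρ1)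
  have hlog : log ρ.toReal ≤ 0 :=
    Real.log_nonpos hρ.le (ENNReal.toReal_le_of_le_ofReal zero_le_one (by simpa using hρ1))
  calc r * log ρ.toReal ≤ m * log ρ.toReal := mul_le_mul_of_nonpos_right hm hlog
    _ = log (ρ.toReal ^ m) := (Real.log_pow _ _).symm
    _ ≤ log g.toReal := Real.log_le_log (pow_pos hρ m)
        (by rw [← ENNReal.toReal_pow]; exact ENNReal.toReal_mono hg h)

section Sequences

variable {un vn : ℕ → Fin d → ℤ} {u v : Fin d → ℝ}

lemma isCoboundedUnder_le_div_of_le {g : ℕ → ℝ} {c : ℝ}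
    (hg : ∀ n, c * rnorm (toR (vn n - un n)) ≤ g n)
    (hulim : Tendsto (fun n : ℕ => (n : ℝ)⁻¹ • toR (un n)) atTop (𝓝 u))
    (hvlim : Tendsto (fun n : ℕ => (n : ℝ)⁻¹ • toR (vn n)) atTop (𝓝 v)) :
    IsCoboundedUnder (· ≤ ·) atTop fun n => g n / n := by
  have hlim : Tendsto (fun n : ℕ => c * rnorm ((n : ℝ)⁻¹ • toR (vn n - un n))) atTop
      (𝓝 (c * rnorm (v - u))) := by
    refine ((continuous_rnorm.tendsto _).comp ?_).const_mul c
    simpa only [toR_sub, smul_sub] using hvlim.sub hulim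
  refine isCoboundedUnder_le_of_eventually_le atTop (x := c * rnorm (v - u) - 1) ?_
  filter_upwards [hlim.eventually (eventually_gt_nhds (sub_one_lt _))] with n hn
  have hscale : c * rnorm ((n : ℝ)⁻¹ • toR (vn n - un n)) = c * rnorm (toR (vn n - un n)) / n := by
    rw [rnorm_smul, abs_inv, Nat.abs_cast]
    ring
  linarith [div_le_div_of_nonneg_right (hg n) n.cast_nonneg]

lemma limsup_log_green_div_le (hp : ∀ x y, p x y ≤ μ (y - x)) {β : Fin d → ℝ} (hβ : Rgen μ β < 1)
    (hpos : ∀ n, 0 < green p (un n) (vn n))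
    (hcob : IsCoboundedUnder (· ≤ ·) atTop
      fun n => log (green p (un n) (vn n)).toReal / n)
    (hulim : Tendsto (fun n : ℕ => (n : ℝ)⁻¹ • toR (un n)) atTop (𝓝 u))
    (hvlim : Tendsto (fun n : ℕ => (n : ℝ)⁻¹ • toR (vn n)) atTop (𝓝 v)) :
    limsup (fun n => log (green p (un n) (vn n)).toReal / n) atTop ≤ -(β ⬝ᵥ (v - u)) := by
  set c := ((1 - Rgen μ β)⁻¹).toReal
  have hinv : (1 - Rgen μ β)⁻¹ ≠ ⊤ := ENNReal.inv_ne_top.2 (tsub_pos_iff_lt.2 hβ).ne'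
  have hc : 0 < c := ENNReal.toReal_pos
    (ENNReal.inv_ne_zero.2 (ne_top_of_le_ne_top ENNReal.one_ne_top tsub_le_self)) hinv
  have hle : ∀ n : ℕ, log (green p (un n) (vn n)).toReal / n ≤
      log c / n + β ⬝ᵥ ((n : ℝ)⁻¹ • toR (un n) - (n : ℝ)⁻¹ • toR (vn n)) := by
    intro n
    have hG := ENNReal.toReal_mono (ENNReal.mul_ne_top hinv ENNReal.ofReal_ne_top)
      (green_le hp β (un n) (vn n))
    rw [ENNReal.toReal_mul, ENNReal.toReal_ofReal (Real.exp_nonneg _)] at hG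
    have hlog := Real.log_le_log (ENNReal.toReal_pos (hpos n).ne' (green_ne_top hp hβ _ _)) hG
    rw [Real.log_mul hc.ne' (Real.exp_ne_zero _), Real.log_exp, toR_sub] at hlog
    rw [← smul_sub, dotProduct_smul, smul_eq_mul, ← div_eq_inv_mul, ← add_div]
    exact div_le_div_of_nonneg_right hlog n.cast_nonneg
  have hlim : Tendsto (fun n : ℕ =>
      log c / n + β ⬝ᵥ ((n : ℝ)⁻¹ • toR (un n) - (n : ℝ)⁻¹ • toR (vn n))) atTop
      (𝓝 (-(β ⬝ᵥ (v - u)))) := by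
    have h := (tendsto_const_div_atTop_nhds_zero_nat (log c)).add
      (((continuous_const (y := β)).dotProduct continuous_id).tendsto _ |>.comp (hulim.sub hvlim))
    rwa [zero_add, id, ← neg_sub v u, dotProduct_neg] at h
  calc limsup (fun n => log (green p (un n) (vn n)).toReal / n) atTop
      ≤ limsup (fun n : ℕ =>
          log c / n + β ⬝ᵥ ((n : ℝ)⁻¹ • toR (un n) - (n : ℝ)⁻¹ • toR (vn n))) atTop :=
        limsup_le_limsup (Eventually.of_forall hle) hcob hlim.isBoundedUnder_le
    _ = -(β ⬝ᵥ (v - u)) := hlim.limsup_eq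

end Sequences

end RW

open RW

theorem statement18_general {d : ℕ}
    (μ : (Fin d → ℤ) → ℝ≥0∞) (hμ : (∑' z, μ z) = 1)
    (E : Set (Fin d → ℤ))
    (p : (Fin d → ℤ) → (Fin d → ℤ) → ℝ≥0∞)
    (hp : p = fun x y => if x ∈ E ∧ y ∈ E then μ (y - x) else 0)
    -- (C0')
    (κ : ℝ)
    (S : Set (Fin d → ℤ)) (hSfin : S.Finite) (hSsupp : ∀ z ∈ S, μ z ≠ 0)
    (hcomm : ∀ x ∈ E, ∀ y ∈ E, x ≠ y → ∃ (m : ℕ) (f : ℕ → Fin d → ℤ),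
      f 0 = x ∧ f m = y ∧ (m : ℝ) ≤ κ * rnorm (toR (y - x)) ∧
      (∀ j ≤ m, f j ∈ E) ∧ ∀ j < m, f (j + 1) - f j ∈ S)
    -- (C2')
    (hRfin : ∃ U : Set (Fin d → ℝ), IsOpen U ∧ {α | Rgen μ α ≤ 1} ⊆ U ∧
      ∀ α ∈ U, Rgen μ α < ⊤)
    (hmean : (fun i => ∑' x : Fin d → ℤ, (μ x).toReal * (x i : ℝ)) ≠ (0 : Fin d → ℝ))
    -- statement
    (α : Fin d → ℝ) (hα : Rgen μ α ≤ 1)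
    (u v : Fin d → ℝ)
    (un vn : ℕ → Fin d → ℤ) (hun : ∀ n, un n ∈ E) (hvn : ∀ n, vn n ∈ E)
    (hulim : Tendsto (fun n : ℕ => (n : ℝ)⁻¹ • toR (un n)) atTop (nhds u))
    (hvlim : Tendsto (fun n : ℕ => (n : ℝ)⁻¹ • toR (vn n)) atTop (nhds v)) :
    Filter.limsup (fun n => Real.log ((green p (un n) (vn n)).toReal) / n) atTop ≤
      -(∑ i, α i * (v i - u i)) := by
  obtain ⟨U, hUopen, hUsub, hUfin⟩ := hRfin
  obtain ⟨β₀, hβ₀⟩ := exists_Rgen_lt_one hμ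
    (eventually_of_mem (hUopen.mem_nhds (hUsub (Rgen_zero hμ).le)) hUfin) hmean
  have hple : ∀ x y, p x y ≤ μ (y - x) := fun x y => by
    simp only [hp]
    split_ifs <;> simp
  have hpE : ∀ x ∈ E, ∀ y ∈ E, p x y = μ (y - x) := fun x hx y hy => by simp [hp, hx, hy]
  obtain ⟨ρ, hρ0, hρ1, hpath⟩ := exists_pow_le_green hpE hSfin hSsupp hcomm
  have hlow : ∀ n, 0 < green p (un n) (vn n) ∧ κ * Real.log ρ.toReal *
      rnorm (toR (vn n - un n)) ≤ Real.log (green p (un n) (vn n)).toReal := fun n => by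
    obtain ⟨m, hm, hρm⟩ := hpath _ (hun n) _ (hvn n)
    refine ⟨(ENNReal.pow_pos hρ0 m).trans_le hρm, ?_⟩
    rw [mul_right_comm]
    exact mul_log_toReal_le_log_toReal hρ0 hρ1 (green_ne_top hple hβ₀ _ _) hm hρm
  have hcob := isCoboundedUnder_le_div_of_le (fun n => (hlow n).2) hulim hvlim
  have hsub : {β | Rgen μ β < 1} ⊆ {β | Filter.limsup
      (fun n => Real.log ((green p (un n) (vn n)).toReal) / n) atTop ≤ -(β ⬝ᵥ (v - u))} :=
    fun β hβ => limsup_log_green_div_le hple hβ (fun n => (hlow n).1) hcob hulim hvlim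
  exact (isClosed_le continuous_const (by fun_prop)).closure_subset_iff.2 hsub
    (mem_closure_setOf_Rgen_lt_one hα hβ₀)

theorem statement18 {d : ℕ}
    (μ : (Fin d → ℤ) → ℝ≥0∞) (hμ : (∑' z, μ z) = 1)
    (C : Set (Fin d → ℝ)) (hCopen : IsOpen C) (hCconv : Convex ℝ C) (hCne : C.Nonempty)
    (hcone : ∀ t : ℝ, 0 < t → ∀ x ∈ C, t • x ∈ C)
    (E : Set (Fin d → ℤ)) (hE : E = {x | toR x ∈ closure C})
    (p : (Fin d → ℤ) → (Fin d → ℤ) → ℝ≥0∞)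
    (hp : p = fun x y => if x ∈ E ∧ y ∈ E then μ (y - x) else 0)
    -- (C0')
    (htrans : ∀ x ∈ E, green p x x < ⊤)
    (κ : ℝ) (hκ : 0 < κ)
    (S : Set (Fin d → ℤ)) (hSfin : S.Finite) (hSsupp : ∀ z ∈ S, μ z ≠ 0)
    (hcomm : ∀ x ∈ E, ∀ y ∈ E, x ≠ y → ∃ (m : ℕ) (f : ℕ → Fin d → ℤ),
      f 0 = x ∧ f m = y ∧ (m : ℝ) ≤ κ * rnorm (toR (y - x)) ∧
      (∀ j ≤ m, f j ∈ E) ∧ ∀ j < m, f (j + 1) - f j ∈ S)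
    -- (C2')
    (hRfin : ∃ U : Set (Fin d → ℝ), IsOpen U ∧ {α | Rgen μ α ≤ 1} ⊆ U ∧
      ∀ α ∈ U, Rgen μ α < ⊤)
    (hmean : (fun i => ∑' x : Fin d → ℤ, (μ x).toReal * (x i : ℝ)) ≠ (0 : Fin d → ℝ))
    -- statement
    (α : Fin d → ℝ) (hα : Rgen μ α ≤ 1)
    (u v : Fin d → ℝ) (hu : u ∈ closure C) (hv : v ∈ closure C)
    (un vn : ℕ → Fin d → ℤ) (hun : ∀ n, un n ∈ E) (hvn : ∀ n, vn n ∈ E)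
    (hulim : Tendsto (fun n : ℕ => (n : ℝ)⁻¹ • toR (un n)) atTop (nhds u))
    (hvlim : Tendsto (fun n : ℕ => (n : ℝ)⁻¹ • toR (vn n)) atTop (nhds v)) :
    Filter.limsup (fun n => Real.log ((green p (un n) (vn n)).toReal) / n) atTop ≤
      -(∑ i, α i * (v i - u i)) :=
  statement18_general μ hμ E p hp κ S hSfin hSsupp hcomm hRfin hmean α hα u v un vn hun hvn hulim
    hvlim
end
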